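/- arXiv:2505.22513 — 12 statements merged into one kernel-verified Lean document; each statement's English description precedes it below -/
import Mathlib

section
/- For every temporal election E = (C, N, ℓ, A), every outcome o that provides strong extended justified representation+ (sEJR+) also provides strong extended justified representation (sEJR). -/
open Finset

/-- Satisfaction of the voter group `S` over the rounds in `R` under the
(sub)outcome `o`: the number of rounds `r ∈ R` in which the selected
candidate `o r` is approved by at least one voter in `S`. -/
def satR {C : Type*} [DecidableEq C] {n ℓ : ℕ} (A : Fin n → Fin ℓ → Finset C)
    (S : Finset (Fin n)) (R : Finset (Fin ℓ)) (o : Fin ℓ → C) : ℕ :=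
  (R.filter fun r => o r ∈ S.biUnion fun i => A i r).card

/-- Strong extended justified representation+. -/
def providesSEJRplus {C : Type*} [DecidableEq C] {n ℓ : ℕ}
    (A : Fin n → Fin ℓ → Finset C) (o : Fin ℓ → C) : Prop :=
  ∀ S : Finset (Fin n), S.Nonempty → ∀ r : Fin ℓ,
    (∃ c : C, ∀ i ∈ S, c ∈ A i r) →
    (∃ i ∈ S, ℓ * S.card / n ≤ satR A {i} univ o) ∨ (∀ i ∈ S, o r ∈ A i r)

/-- Strong extended justified representation. -/
def providesSEJR {C : Type*} [DecidableEq C] {n ℓ : ℕ}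
    (A : Fin n → Fin ℓ → Finset C) (o : Fin ℓ → C) : Prop :=
  ∀ t : ℕ, 0 < t → ∀ S : Finset (Fin n), S.Nonempty →
    (∃ R : Finset (Fin ℓ), R.card = t ∧ ∀ r ∈ R, ∃ c : C, ∀ i ∈ S, c ∈ A i r) →
    ∃ i ∈ S, min t (ℓ * S.card / n) ≤ satR A {i} univ o


/-- For every temporal election, every outcome that provides sEJR+ also
provides sEJR. -/
theorem sEJRplus_implies_sEJR {C : Type*} [Fintype C] [Nonempty C] [DecidableEq C] {n ℓ : ℕ}
    (hℓ : 1 ≤ ℓ) (A : Fin n → Fin ℓ → Finset C) (o : Fin ℓ → C)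
    (h : providesSEJRplus A o) : providesSEJR A o := by
  rintro t ht S hS ⟨R, hcard, hagree⟩
  by_cases hex : ∃ i ∈ S, ℓ * S.card / n ≤ satR A {i} univ o
  · obtain ⟨i, hi, hle⟩ := hex
    exact ⟨i, hi, le_trans (min_le_right _ _) hle⟩
  · push_neg at hex
    have hall : ∀ r ∈ R, ∀ i ∈ S, o r ∈ A i r := by
      intro r hr
      rcases h S hS r (hagree r hr) with ⟨i, hi, hle⟩ | h2
      · exact absurd hle (not_le.mpr (hex i hi))
      · exact h2
    obtain ⟨i, hi⟩ := hS
    refine ⟨i, hi, le_trans (min_le_left _ _) ?_⟩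
    rw [← hcard, satR]
    apply Finset.card_le_card
    intro r hr
    simp only [Finset.mem_filter, Finset.mem_univ, true_and, Finset.mem_biUnion,
      Finset.mem_singleton]
    exact ⟨i, rfl, hall r hr i hi⟩
end

section
/- Consider the temporal election E with 12 voters N = {1,…,12}, 6 rounds, and candidates {x, y, z, c_1, …, c_12}, where in round 1 voters 1–4 each approve exactly {x}, voters 5–8 each approve exactly {y}, voters 9–12 each approve exactly {z}, and in each of rounds 2 through 6 each voter i approves exactly {c_i}. Then no outcome for E provides strong justified representation (sJR). (In particular, there exists a temporal election in which every voter approves exactly one candidate per round and no outcome provides sJR.) -/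
open Finset

/-- Strong justified representation. -/
def providesSJR {C : Type*} [DecidableEq C] {n ℓ : ℕ}
    (A : Fin n → Fin ℓ → Finset C) (o : Fin ℓ → C) : Prop :=
  ∀ t : ℕ, 0 < t → ∀ S : Finset (Fin n),
    (∃ R : Finset (Fin ℓ), R.card = t ∧ ∀ r ∈ R, ∃ c : C, ∀ i ∈ S, c ∈ A i r) →
    min 1 (ℓ * S.card / n) ≤ satR A S univ o


/-- The election of Proposition 3.3: 12 voters, 6 rounds, candidates
`x = 0, y = 1, z = 2, c_i = 2 + i` (as elements of `Fin 15`).  In round 1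
(index `0`) voters 1–4 approve exactly `{x}`, voters 5–8 exactly `{y}`,
voters 9–12 exactly `{z}`; in rounds 2–6 voter `i` approves exactly `{c_i}`. -/
def A₃ : Fin 12 → Fin 6 → Finset (Fin 15) := fun i r =>
  if r.val = 0 then {⟨i.val / 4, by have := i.isLt; omega⟩}
  else {⟨3 + i.val, by have := i.isLt; omega⟩}


/-!
Two voters of the same block of four agree in round 1, and since `ℓ * 2 / n = 1`, sJR forces one of
them to be represented. The round-1 candidate serves at most one block, so in each of the two other
blocks at least three voters must be represented in rounds 2–6. That makes six voters, but each of
these five rounds represents at most one voter.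
-/

theorem providesSJR.exists_approved_of_agree {C : Type*} [DecidableEq C] {n ℓ : ℕ}
    {A : Fin n → Fin ℓ → Finset C} {o : Fin ℓ → C} (h : providesSJR A o)
    {S : Finset (Fin n)} (hS : S.Nonempty) (hlarge : n ≤ ℓ * S.card) {r : Fin ℓ} {c : C}
    (hc : ∀ i ∈ S, c ∈ A i r) : ∃ r', ∃ i ∈ S, o r' ∈ A i r' := by
  obtain ⟨i, -⟩ := hS
  have hquota : 1 ≤ ℓ * S.card / n := (Nat.one_le_div_iff (Fin.pos i)).2 hlarge
  have hsat := h 1 one_pos S ⟨{r}, card_singleton r, fun r' hr' => ⟨c, mem_singleton.1 hr' ▸ hc⟩⟩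
  rw [min_eq_left hquota] at hsat
  obtain ⟨r', hr'⟩ := card_pos.1 hsat
  obtain ⟨-, i, hi, happ⟩ := mem_filter.1 hr' |>.imp_right mem_biUnion.1
  exact ⟨r', i, hi, happ⟩

namespace A₃

theorem mem_zero {i : Fin 12} {c : Fin 15} : c ∈ A₃ i 0 ↔ (c : ℕ) = i / 4 := by
  simp [A₃, Fin.ext_iff]

theorem mem_of_ne_zero {i : Fin 12} {r : Fin 6} (hr : r ≠ 0) {c : Fin 15} :
    c ∈ A₃ i r ↔ c = Fin.natAdd 3 i := by
  simp [A₃, Fin.ext_iff, hr]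

def block (g : Fin 3) : Finset (Fin 12) :=
  univ.filter fun i => (i : ℕ) / 4 = g

theorem card_block (g : Fin 3) : (block g).card = 4 := by
  fin_cases g <;> rfl

theorem disjoint_block {g₁ g₂ : Fin 3} (hne : g₁ ≠ g₂) : Disjoint (block g₁) (block g₂) :=
  disjoint_filter.2 fun _ _ h₁ h₂ => hne (Fin.ext (h₁ ▸ h₂))

def lateRepresented (o : Fin 6 → Fin 15) : Finset (Fin 12) :=
  univ.filter fun i => ∃ r, r ≠ 0 ∧ o r ∈ A₃ i r

theorem card_lateRepresented_le (o : Fin 6 → Fin 15) : (lateRepresented o).card ≤ 5 :=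
  calc (lateRepresented o).card
      ≤ (({0}ᶜ : Finset (Fin 6)).image o).card := by
        refine card_le_card_of_injOn (Fin.natAdd 3) (fun i hi => ?_)
          (Fin.natAdd_injective 12 3).injOn
        obtain ⟨r, hr, happ⟩ := (mem_filter.1 hi).2
        exact mem_image.2 ⟨r, by simpa using hr, (mem_of_ne_zero hr).1 happ⟩
    _ ≤ ({0}ᶜ : Finset (Fin 6)).card := card_image_le
    _ = 5 := rfl

theorem mem_lateRepresented_of_approved {o : Fin 6 → Fin 15} {i : Fin 12} {r : Fin 6}
    (hfirst : (o 0 : ℕ) ≠ i / 4) (happ : o r ∈ A₃ i r) : i ∈ lateRepresented o := by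
  obtain rfl | hr := eq_or_ne r 0
  · exact absurd (mem_zero.1 happ) hfirst
  · exact mem_filter.2 ⟨mem_univ i, r, hr, happ⟩

theorem three_le_card_block_inter_lateRepresented {o : Fin 6 → Fin 15} (h : providesSJR A₃ o)
    {g : Fin 3} (hg : (g : ℕ) ≠ o 0) : 3 ≤ (block g ∩ lateRepresented o).card := by
  have hleft : (block g \ lateRepresented o).card ≤ 1 := by
    refine card_le_one.2 fun i hi j hj => ?_
    by_contra hij
    simp only [block, mem_sdiff, mem_filter, mem_univ, true_and] at hi hj
    obtain ⟨r, k, hk, happ⟩ := h.exists_approved_of_agree (S := {i, j}) (insert_nonempty i {j})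
      (by rw [card_pair hij]) (r := 0) (c := ⟨g, by omega⟩)
      (by simp only [mem_insert, mem_singleton, mem_zero]; omega)
    rcases mem_insert.1 hk with rfl | hk
    · exact hi.2 (mem_lateRepresented_of_approved (by omega) happ)
    · exact hj.2 (mem_lateRepresented_of_approved (by omega) (mem_singleton.1 hk ▸ happ))
  have := card_inter_add_card_sdiff (block g) (lateRepresented o)
  rw [card_block] at this
  omega

end A₃

open A₃

/-- No outcome for this election provides sJR. -/
theorem no_outcome_provides_sJR : ∀ o : Fin 6 → Fin 15, ¬ providesSJR A₃ o := by
  intro o h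
  obtain ⟨g₁, g₂, hne, h₁, h₂⟩ :
      ∃ g₁ g₂ : Fin 3, g₁ ≠ g₂ ∧ (g₁ : ℕ) ≠ o 0 ∧ (g₂ : ℕ) ≠ o 0 := by
    generalize o 0 = c
    revert c
    decide
  have hdisj : Disjoint (block g₁ ∩ lateRepresented o) (block g₂ ∩ lateRepresented o) :=
    (disjoint_block hne).mono inter_subset_left inter_subset_left
  have hunion : (block g₁ ∩ lateRepresented o ∪ block g₂ ∩ lateRepresented o).card ≤
      (lateRepresented o).card :=
    card_le_card (union_subset inter_subset_right inter_subset_right)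
  rw [card_union_of_disjoint hdisj] at hunion
  have := three_le_card_block_inter_lateRepresented h h₁
  have := three_le_card_block_inter_lateRepresented h h₂
  have := card_lateRepresented_le o
  omega
end

section
/- Let E = (C, N, ℓ, A) be a temporal election and let ε be a real number with 0 ≤ ε < 1/ℓ². If o is an outcome such that for every outcome o' that differs from o in exactly one round it holds that s_H(o) + ε ≥ s_H(o'), then o provides extended justified representation+ (EJR+). -/
open Finset

/-- A group `S` is `(σ, τ)`-cohesive if there is a set `R` of `τ` rounds and,
for each round in `R`, a candidate approved in that round by at least `σ`
voters of `S`. -/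
def cohesive {C : Type*} [DecidableEq C] {n ℓ : ℕ} (A : Fin n → Fin ℓ → Finset C)
    (S : Finset (Fin n)) (σ τ : ℕ) : Prop :=
  ∃ R : Finset (Fin ℓ), R.card = τ ∧
    ∀ r ∈ R, ∃ c : C, σ ≤ (S.filter fun i => c ∈ A i r).card

/-- The harmonic (PAV) score of an outcome: `∑_{i ∈ N} ∑_{j=1}^{sat_i(o)} 1/j`. -/
noncomputable def harmonicScore {C : Type*} [DecidableEq C] {n ℓ : ℕ}
    (A : Fin n → Fin ℓ → Finset C) (o : Fin ℓ → C) : ℝ :=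
  ∑ i : Fin n, ∑ j ∈ Finset.range (satR A {i} univ o), (1 : ℝ) / (j + 1)

/-- Extended justified representation+. -/
def providesEJRplus {C : Type*} [DecidableEq C] {n ℓ : ℕ}
    (A : Fin n → Fin ℓ → Finset C) (o : Fin ℓ → C) : Prop :=
  ∀ σ τ : ℕ, 1 ≤ σ → σ ≤ n → 1 ≤ τ → τ ≤ ℓ →
    ∀ S : Finset (Fin n), cohesive A S σ τ →
    ∀ r : Fin ℓ, (∃ c : C, ∀ i ∈ S, c ∈ A i r) →
    (∃ i ∈ S, τ * σ / n ≤ satR A {i} univ o) ∨ (∀ i ∈ S, o r ∈ A i r)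

/-! ### Auxiliary lemmas -/

/-- Partial sums of the harmonic series. -/
noncomputable def HS : ℕ → ℝ := fun m => ∑ j ∈ Finset.range m, (1:ℝ)/(j+1)

lemma HS_succ (m : ℕ) : HS (m+1) = HS m + 1/(m+1) := by
  simp [HS, Finset.sum_range_succ]

lemma satR_single {C : Type*} [DecidableEq C] {n ℓ : ℕ} (A : Fin n → Fin ℓ → Finset C)
    (i : Fin n) (o : Fin ℓ → C) :
    satR A {i} univ o = (univ.filter fun r => o r ∈ A i r).card := by
  simp [satR]

lemma sat_pos {C : Type*} [DecidableEq C] {n ℓ : ℕ} {A : Fin n → Fin ℓ → Finset C}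
    {i : Fin n} {o : Fin ℓ → C} {r : Fin ℓ} (h : o r ∈ A i r) :
    0 < satR A {i} univ o := by
  rw [satR_single]
  exact card_pos.2 ⟨r, mem_filter.2 ⟨mem_univ r, h⟩⟩

lemma sat_update_add {C : Type*} [DecidableEq C] {n ℓ : ℕ} (A : Fin n → Fin ℓ → Finset C)
    (o : Fin ℓ → C) (i : Fin n) (r : Fin ℓ) (c : C) :
    satR A {i} univ (Function.update o r c) + (if o r ∈ A i r then 1 else 0)
      = satR A {i} univ o + (if c ∈ A i r then 1 else 0) := by
  rw [satR_single, satR_single, card_filter, card_filter,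
    ← Finset.sum_erase_add _ _ (mem_univ r), ← Finset.sum_erase_add _ _ (mem_univ r)]
  have h1 : ∀ q ∈ univ.erase r,
      (if Function.update o r c q ∈ A i q then 1 else 0) = (if o q ∈ A i q then 1 else 0) := by
    intro q hq
    rw [Function.update_of_ne (mem_erase.1 hq).1]
  rw [Finset.sum_congr rfl h1, Function.update_self]
  omega

/-- Pointwise bound on the score change of voter `i` with `sat + 1 ≤ m`. -/
lemma delta_ge_S {C : Type*} [DecidableEq C] {n ℓ : ℕ} (A : Fin n → Fin ℓ → Finset C)
    (o : Fin ℓ → C) (i : Fin n) (m : ℕ) (hm : satR A {i} univ o + 1 ≤ m)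
    (r : Fin ℓ) (c : C) :
    (if c ∈ A i r then (1:ℝ)/m else 0)
      - (if o r ∈ A i r then (1:ℝ)/(satR A {i} univ o) else 0)
    ≤ HS (satR A {i} univ (Function.update o r c)) - HS (satR A {i} univ o) := by
  have key := sat_update_add A o i r c
  set s := satR A {i} univ o with hs
  set s' := satR A {i} univ (Function.update o r c) with hs'
  have hmpos : (0:ℝ) < m := by
    have : 0 < m := by omega
    exact_mod_cast this
  by_cases hc : c ∈ A i r <;> by_cases ho : o r ∈ A i r <;>
      simp only [hc, ho, if_true, if_false, sub_zero, zero_sub] at key ⊢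
  · have hsp : 0 < s := sat_pos ho
    have hse : s' = s := by omega
    rw [hse, sub_self]
    have h1 : (1:ℝ)/m ≤ 1/s := by
      apply one_div_le_one_div_of_le
      · exact_mod_cast hsp
      · exact_mod_cast (by omega : s ≤ m)
    linarith
  · have hse : s' = s + 1 := by omega
    rw [hse, HS_succ]
    have h1 : (1:ℝ)/m ≤ 1/(s+1) := by
      apply one_div_le_one_div_of_le
      · positivity
      · exact_mod_cast hm
    linarith
  · have hse : s = s' + 1 := by omega
    rw [hse, HS_succ]
    have : ((s':ℕ):ℝ) + 1 = ((s' + 1 : ℕ):ℝ) := by push_cast; ring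
    rw [this]
    simp
  · have hse : s' = s := by omega
    rw [hse]
    simp

/-- Pointwise bound on the score change of an arbitrary voter. -/
lemma delta_ge_out {C : Type*} [DecidableEq C] {n ℓ : ℕ} (A : Fin n → Fin ℓ → Finset C)
    (o : Fin ℓ → C) (i : Fin n) (r : Fin ℓ) (c : C) :
    - (if o r ∈ A i r then (1:ℝ)/(satR A {i} univ o) else 0)
    ≤ HS (satR A {i} univ (Function.update o r c)) - HS (satR A {i} univ o) := by
  have key := sat_update_add A o i r c
  set s := satR A {i} univ o with hs
  set s' := satR A {i} univ (Function.update o r c) with hs'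
  by_cases hc : c ∈ A i r <;> by_cases ho : o r ∈ A i r <;>
      simp only [hc, ho, if_true, if_false, neg_zero] at key ⊢
  · have hse : s' = s := by omega
    have hsp : 0 < s := sat_pos ho
    rw [hse, sub_self]
    have : (0:ℝ) ≤ 1/(s:ℝ) := by positivity
    linarith
  · have hse : s' = s + 1 := by omega
    rw [hse, HS_succ]
    have : (0:ℝ) ≤ 1/((s:ℝ)+1) := by positivity
    linarith
  · have hse : s = s' + 1 := by omega
    rw [hse, HS_succ]
    have : ((s':ℕ):ℝ) + 1 = ((s' + 1 : ℕ):ℝ) := by push_cast; ring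
    rw [this]
    simp
  · have hse : s' = s := by omega
    rw [hse]
    simp

/-- Pointwise bound when the new candidate is approved by voter `i`. -/
lemma delta_ge_B {C : Type*} [DecidableEq C] {n ℓ : ℕ} (A : Fin n → Fin ℓ → Finset C)
    (o : Fin ℓ → C) (i : Fin n) (m : ℕ) (hm : satR A {i} univ o + 1 ≤ m)
    (r : Fin ℓ) (c : C) (hc : c ∈ A i r) :
    (if o r ∈ A i r then 0 else (1:ℝ)/m)
    ≤ HS (satR A {i} univ (Function.update o r c)) - HS (satR A {i} univ o) := by
  have key := sat_update_add A o i r c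
  set s := satR A {i} univ o with hs
  set s' := satR A {i} univ (Function.update o r c) with hs'
  by_cases ho : o r ∈ A i r <;> simp only [hc, ho, if_true, if_false] at key ⊢
  · have hse : s' = s := by omega
    rw [hse]
    simp
  · have hse : s' = s + 1 := by omega
    rw [hse, HS_succ]
    have h1 : (1:ℝ)/m ≤ 1/(s+1) := by
      apply one_div_le_one_div_of_le
      · positivity
      · exact_mod_cast hm
    linarith

lemma satT_le {C : Type*} [DecidableEq C] {n ℓ : ℕ} (A : Fin n → Fin ℓ → Finset C)
    (i : Fin n) (o : Fin ℓ → C) (T : Finset (Fin ℓ)) :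
    (T.filter fun r => o r ∈ A i r).card ≤ satR A {i} univ o := by
  rw [satR_single]
  exact card_le_card (filter_subset_filter _ (subset_univ T))

lemma cond_sum_eq {α : Type*} (T : Finset α) (P : α → Prop) [DecidablePred P] (x : ℝ) :
    ∑ r ∈ T, (if P r then x else 0) = ((T.filter P).card : ℝ) * x := by
  rw [← Finset.sum_filter, Finset.sum_const, nsmul_eq_mul]

lemma loss_sum_le_one {C : Type*} [DecidableEq C] {n ℓ : ℕ} (A : Fin n → Fin ℓ → Finset C)
    (i : Fin n) (o : Fin ℓ → C) (T : Finset (Fin ℓ)) :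
    ∑ r ∈ T, (if o r ∈ A i r then (1:ℝ)/(satR A {i} univ o) else 0) ≤ 1 := by
  rw [cond_sum_eq]
  have hc := satT_le A i o T
  rcases Nat.eq_zero_or_pos (satR A {i} univ o) with h0 | hp
  · have : (T.filter fun r => o r ∈ A i r).card = 0 := by omega
    rw [this]
    norm_num
  · have hsp : (0:ℝ) < (satR A {i} univ o : ℝ) := by exact_mod_cast hp
    rw [mul_one_div, div_le_one hsp]
    exact_mod_cast hc

/-- Every output of `ε`-lsPAV with `0 ≤ ε < 1/ℓ²` provides EJR+: if `o` is an
outcome whose harmonic score cannot be improved by more than `ε` by changing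
the chosen candidate in a single round, then `o` provides EJR+. -/
theorem lsPAV_provides_EJRplus {C : Type*} [Fintype C] [Nonempty C] [DecidableEq C] {n ℓ : ℕ}
    (hℓ : 1 ≤ ℓ) (A : Fin n → Fin ℓ → Finset C) (ε : ℝ) (hε0 : 0 ≤ ε)
    (hε : ε < 1 / (ℓ : ℝ) ^ 2) (o : Fin ℓ → C)
    (hopt : ∀ o' : Fin ℓ → C,
      (∃ r : Fin ℓ, o' r ≠ o r ∧ ∀ q : Fin ℓ, q ≠ r → o' q = o q) →
      harmonicScore A o + ε ≥ harmonicScore A o') :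
    providesEJRplus A o := by
  intro σ τ hσ1 hσn hτ1 hτℓ S hcoh r₀ hc₀
  by_contra hcon
  push_neg at hcon
  obtain ⟨h1, i₀, hi₀S, hi₀⟩ := hcon
  obtain ⟨cstar, hcstar⟩ := hc₀
  obtain ⟨R, hRcard, hRco⟩ := hcoh
  choose! f hf using hRco
  set m : ℕ := τ * σ / n with hmdef
  have hn : 0 < n := lt_of_lt_of_le hσ1 hσn
  have hsatlt : ∀ i ∈ S, satR A {i} univ o + 1 ≤ m := by
    intro i hi
    have := h1 i hi
    omega
  have hm1 : 1 ≤ m := by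
    have := hsatlt i₀ hi₀S
    omega
  have hmτ : m ≤ τ := by
    have h2 : τ * σ ≤ τ * n := Nat.mul_le_mul_left τ hσn
    have h3 := Nat.div_le_div_right (c := n) h2
    rw [hmdef]
    calc τ * σ / n ≤ τ * n / n := h3
      _ = τ := Nat.mul_div_cancel τ hn
  have hmℓ : m ≤ ℓ := le_trans hmτ hτℓ
  have hnm : n * m ≤ τ * σ := by
    calc n * m = τ*σ/n * n := by rw [hmdef, Nat.mul_comm]
      _ ≤ τ * σ := Nat.div_mul_le_self _ _
  have hσS : σ ≤ S.card := by
    have hRne : R.Nonempty := by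
      rw [← Finset.card_pos, hRcard]
      omega
    obtain ⟨r₁, hr₁⟩ := hRne
    exact le_trans (hf r₁ hr₁) (card_le_card (filter_subset _ _))
  have hSn : S.card ≤ n := by
    have := card_le_univ S
    simpa using this
  set γ : Fin ℓ → C := fun r => if r = r₀ then cstar else f r with hγdef
  have hγr₀ : γ r₀ = cstar := by simp [hγdef]
  have hγne : ∀ r : Fin ℓ, r ≠ r₀ → γ r = f r := by
    intro r hr
    simp [hγdef, hr]
  set T : Finset (Fin ℓ) := insert r₀ R with hTdef
  have hr₀T : r₀ ∈ T := mem_insert_self _ _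
  have hTsub : ∀ r ∈ T, r ≠ r₀ → r ∈ R := by
    intro r hr hne
    rcases mem_insert.1 hr with h | h
    · exact absurd h hne
    · exact h
  have hτT : τ ≤ T.card := hRcard ▸ card_le_card (subset_insert _ _)
  have hTℓ : T.card ≤ ℓ := by
    have := card_le_univ T
    simpa using this
  have hscore : ∀ o' : Fin ℓ → C,
      harmonicScore A o' = ∑ i : Fin n, HS (satR A {i} univ o') := fun _ => rfl
  set D : ℝ := ∑ r ∈ T, (harmonicScore A (Function.update o r (γ r)) - harmonicScore A o)
    with hDdef
  -- upper bound on D from local optimality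
  have hup : D ≤ (ℓ:ℝ) * ε := by
    have hstep : ∀ r ∈ T,
        harmonicScore A (Function.update o r (γ r)) - harmonicScore A o ≤ ε := by
      intro r _
      by_cases hgo : γ r = o r
      · rw [hgo, Function.update_eq_self]
        simpa using hε0
      · have := hopt (Function.update o r (γ r))
          ⟨r, by simpa [Function.update_self] using hgo,
            fun q hq => Function.update_of_ne hq _ _⟩
        linarith
    calc D ≤ ∑ _r ∈ T, ε := Finset.sum_le_sum hstep
      _ = (T.card : ℝ) * ε := by rw [Finset.sum_const, nsmul_eq_mul]
      _ ≤ (ℓ:ℝ) * ε := by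
          apply mul_le_mul_of_nonneg_right _ hε0
          exact_mod_cast hTℓ
  -- D as a double sum, indexed by voters
  have hD2 : D = ∑ i : Fin n, ∑ r ∈ T,
      (HS (satR A {i} univ (Function.update o r (γ r))) - HS (satR A {i} univ o)) := by
    rw [hDdef]
    rw [show (∑ r ∈ T, (harmonicScore A (Function.update o r (γ r)) - harmonicScore A o))
        = ∑ r ∈ T, ∑ i : Fin n,
          (HS (satR A {i} univ (Function.update o r (γ r))) - HS (satR A {i} univ o)) from
      Finset.sum_congr rfl fun r _ => by
        rw [hscore, hscore, ← Finset.sum_sub_distrib]]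
    exact Finset.sum_comm
  -- split voters into S and the rest
  have hsplit : ∑ i : Fin n, ∑ r ∈ T,
      (HS (satR A {i} univ (Function.update o r (γ r))) - HS (satR A {i} univ o))
      = ∑ i ∈ univ \ S, (∑ r ∈ T,
          (HS (satR A {i} univ (Function.update o r (γ r))) - HS (satR A {i} univ o)))
        + ∑ i ∈ S, (∑ r ∈ T,
          (HS (satR A {i} univ (Function.update o r (γ r))) - HS (satR A {i} univ o))) :=
    (Finset.sum_sdiff (subset_univ S)).symm
  -- outsiders lose at most 1 each
  have hout : ∀ i : Fin n, (-1:ℝ) ≤ ∑ r ∈ T,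
      (HS (satR A {i} univ (Function.update o r (γ r))) - HS (satR A {i} univ o)) := by
    intro i
    have l2 : ∑ r ∈ T, -(if o r ∈ A i r then (1:ℝ)/(satR A {i} univ o) else 0)
        ≤ ∑ r ∈ T,
          (HS (satR A {i} univ (Function.update o r (γ r))) - HS (satR A {i} univ o)) :=
      Finset.sum_le_sum fun r _ => delta_ge_out A o i r (γ r)
    have l1 := loss_sum_le_one A i o T
    rw [Finset.sum_neg_distrib] at l2
    linarith
  have houtsum : -((n:ℝ) - S.card) ≤ ∑ i ∈ univ \ S, (∑ r ∈ T,
      (HS (satR A {i} univ (Function.update o r (γ r))) - HS (satR A {i} univ o))) := by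
    have h0 := Finset.sum_le_sum (fun i (_ : i ∈ univ \ S) => hout i)
    rw [Finset.sum_const, card_sdiff_of_subset (subset_univ S)] at h0
    simp only [card_univ, Fintype.card_fin, nsmul_eq_mul, mul_neg_one] at h0
    rw [Nat.cast_sub hSn] at h0
    exact h0
  -- lower bound on D: 1/m ≤ D
  have hmpos : (0:ℝ) < m := by exact_mod_cast hm1
  have hlow : (1:ℝ)/m ≤ D := by
    rcases eq_or_lt_of_le hσS with hcase | hcase
    · -- Case B : S.card = σ; every member of S approves every designated candidate
      have hallapp : ∀ r ∈ T, ∀ i ∈ S, γ r ∈ A i r := by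
        intro r hr i hi
        by_cases h : r = r₀
        · subst h
          rw [hγr₀]
          exact hcstar i hi
        · rw [hγne r h]
          have hrR := hTsub r hr h
          have hfe : S.filter (fun i => f r ∈ A i r) = S := by
            apply Finset.eq_of_subset_of_card_le (filter_subset _ _)
            rw [← hcase]
            exact hf r hrR
          have hmem : i ∈ S.filter (fun i => f r ∈ A i r) := hfe.symm ▸ hi
          exact (mem_filter.1 hmem).2
      have hBv : ∀ i ∈ S, (T.card:ℝ)*(1/m) - ((m:ℝ)-1)*(1/m) ≤ ∑ r ∈ T,
          (HS (satR A {i} univ (Function.update o r (γ r))) - HS (satR A {i} univ o)) := by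
        intro i hi
        have hpt : ∀ r ∈ T, (if o r ∈ A i r then (0:ℝ) else 1/m)
            ≤ HS (satR A {i} univ (Function.update o r (γ r))) - HS (satR A {i} univ o) :=
          fun r hr => delta_ge_B A o i m (hsatlt i hi) r (γ r) (hallapp r hr i hi)
        have hsum := Finset.sum_le_sum hpt
        have he : ∀ r ∈ T, (if o r ∈ A i r then (0:ℝ) else 1/m)
            = 1/m - (if o r ∈ A i r then (1:ℝ)/m else 0) := by
          intro r _
          by_cases h : o r ∈ A i r <;> simp [h]
        rw [Finset.sum_congr rfl he, Finset.sum_sub_distrib, Finset.sum_const, nsmul_eq_mul,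
          mul_one_div, cond_sum_eq] at hsum
        have hcnt : ((T.filter fun r => o r ∈ A i r).card : ℝ) ≤ (m:ℝ) - 1 := by
          have hle1 := satT_le A i o T
          have hle2 := hsatlt i hi
          have hle3 : (T.filter fun r => o r ∈ A i r).card + 1 ≤ m := by omega
          have := (Nat.cast_le (α := ℝ)).2 hle3
          push_cast at this
          linarith
        have hmul : ((T.filter fun r => o r ∈ A i r).card : ℝ) * (1/m) ≤ ((m:ℝ)-1) * (1/m) := by
          apply mul_le_mul_of_nonneg_right hcnt
          positivity
        have hfin : (T.card:ℝ)/m = (T.card:ℝ)*(1/m) := by ring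
        linarith [hsum]
      have hSsum := Finset.sum_le_sum hBv
      rw [Finset.sum_const, nsmul_eq_mul] at hSsum
      -- numerics
      have hScast : (S.card : ℝ) = (σ:ℝ) := by exact_mod_cast hcase.symm
      have htT : (τ:ℝ) ≤ (T.card:ℝ) := by exact_mod_cast hτT
      have hnmR : (n:ℝ)*m ≤ (τ:ℝ)*σ := by exact_mod_cast hnm
      have hσ1R : (1:ℝ) ≤ σ := by exact_mod_cast hσ1
      have k1 : (σ:ℝ)*((τ:ℝ)*(1/m)) ≤ (σ:ℝ)*((T.card:ℝ)*(1/m)) := by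
        apply mul_le_mul_of_nonneg_left _ (by linarith)
        apply mul_le_mul_of_nonneg_right htT
        positivity
      have k2 : ((n:ℝ)*m + 1)*(1/m) ≤ ((σ:ℝ)*τ + σ)*(1/m) := by
        apply mul_le_mul_of_nonneg_right _ (by positivity)
        nlinarith
      have k3 : ((n:ℝ)*m + 1)*(1/m) = n + 1/m := by
        field_simp
      have k4 : ((σ:ℝ)*τ + σ)*(1/m) = (σ:ℝ)*((τ:ℝ)*(1/m)) + σ*(1/m) := by ring
      have k5 : (σ:ℝ)*((T.card:ℝ)*(1/m) - ((m:ℝ)-1)*(1/m))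
          = (σ:ℝ)*((T.card:ℝ)*(1/m)) + σ*(1/m) - σ := by
        have : ((m:ℝ)-1)*(1/m) = 1 - 1/m := by field_simp
        rw [this]
        ring
      rw [hScast] at hSsum
      rw [hD2, hsplit]
      have hσn' : (σ:ℝ) ≤ n := by exact_mod_cast hσn
      rw [hScast] at houtsum
      linarith [houtsum, hSsum]
    · -- Case A : σ < S.card
      have hAv : ∀ i ∈ S,
          (∑ r ∈ T, (if γ r ∈ A i r then (1:ℝ)/m else 0)) - 1 ≤ ∑ r ∈ T,
          (HS (satR A {i} univ (Function.update o r (γ r))) - HS (satR A {i} univ o)) := by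
        intro i hi
        have hpt := Finset.sum_le_sum
          (fun r (_ : r ∈ T) => delta_ge_S A o i m (hsatlt i hi) r (γ r))
        rw [Finset.sum_sub_distrib] at hpt
        have l1 := loss_sum_le_one A i o T
        linarith
      have hSsum := Finset.sum_le_sum hAv
      rw [Finset.sum_sub_distrib, Finset.sum_const, nsmul_eq_mul, mul_one] at hSsum
      set K : ℕ := ∑ r ∈ T, (S.filter fun i => γ r ∈ A i r).card with hKdef
      have hgains : ∑ i ∈ S, ∑ r ∈ T, (if γ r ∈ A i r then (1:ℝ)/m else 0)
          = (K:ℝ) * (1/m) := by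
        rw [Finset.sum_comm]
        rw [Finset.sum_congr rfl (fun r (_ : r ∈ T) => cond_sum_eq S (fun i => γ r ∈ A i r) ((1:ℝ)/m))]
        rw [← Finset.sum_mul, hKdef]
        push_cast
        ring
      have hKge : n*m + 1 ≤ K := by
        have hsplitK : ∑ r ∈ T.erase r₀, (S.filter fun i => γ r ∈ A i r).card
            + (S.filter fun i => γ r₀ ∈ A i r₀).card = K := Finset.sum_erase_add T _ hr₀T
        have hr0card : (S.filter fun i => γ r₀ ∈ A i r₀).card = S.card := by
          rw [Finset.filter_true_of_mem]
          intro i hi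
          rw [hγr₀]
          exact hcstar i hi
        have hterm : ∀ r ∈ T.erase r₀, σ ≤ (S.filter fun i => γ r ∈ A i r).card := by
          intro r hr
          have hne := ne_of_mem_erase hr
          have hrR := hTsub r (mem_of_mem_erase hr) hne
          rw [hγne r hne]
          exact hf r hrR
        have hsum2 : (T.erase r₀).card * σ ≤ ∑ r ∈ T.erase r₀, (S.filter fun i => γ r ∈ A i r).card := by
          calc (T.erase r₀).card * σ = ∑ _r ∈ T.erase r₀, σ := by
                rw [Finset.sum_const, smul_eq_mul]
            _ ≤ _ := Finset.sum_le_sum hterm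
        have hecard : τ - 1 ≤ (T.erase r₀).card := by
          rw [card_erase_of_mem hr₀T]
          omega
        have h5 : (τ-1)*σ + σ = τ*σ := by
          cases' τ with t
          · omega
          · simpa [Nat.succ_sub_one] using (Nat.succ_mul t σ).symm
        have hsum3 : (τ-1)*σ ≤ ∑ r ∈ T.erase r₀, (S.filter fun i => γ r ∈ A i r).card :=
          le_trans (Nat.mul_le_mul_right σ hecard) hsum2
        calc n*m + 1 ≤ τ*σ + 1 := Nat.add_le_add_right hnm 1
          _ = (τ-1)*σ + σ + 1 := by rw [h5]
          _ ≤ (τ-1)*σ + S.card := by omega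
          _ ≤ ∑ r ∈ T.erase r₀, (S.filter fun i => γ r ∈ A i r).card
              + (S.filter fun i => γ r₀ ∈ A i r₀).card := by
                rw [hr0card]
                exact Nat.add_le_add hsum3 le_rfl
          _ = K := hsplitK
      rw [hgains] at hSsum
      have hKR : ((n:ℝ)*m + 1) * (1/m) ≤ (K:ℝ) * (1/m) := by
        apply mul_le_mul_of_nonneg_right _ (by positivity)
        have := (Nat.cast_le (α := ℝ)).2 hKge
        push_cast at this
        linarith
      have k3 : ((n:ℝ)*m + 1)*(1/m) = n + 1/m := by
        field_simp
      rw [hD2, hsplit]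
      linarith [houtsum, hSsum]
  -- final contradiction
  have hℓpos : (0:ℝ) < ℓ := by exact_mod_cast hℓ
  have h1ℓ : (1:ℝ)/ℓ ≤ 1/m := by
    apply one_div_le_one_div_of_le hmpos
    exact_mod_cast hmℓ
  have hlt : (ℓ:ℝ) * ε < 1/ℓ := by
    have := mul_lt_mul_of_pos_left hε hℓpos
    calc (ℓ:ℝ) * ε < ℓ * (1/ℓ^2) := this
      _ = 1/ℓ := by field_simp
  linarith
end

section
/- Every temporal election E = (C, N, ℓ, A) admits an outcome that provides extended justified representation+ (EJR+). In particular, any outcome that maximizes the harmonic score s_H over all outcomes in C^ℓ provides EJR+. -/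
open Finset

section Aux

variable {C : Type*} [DecidableEq C] {n ℓ : ℕ}

private lemma sum_ite_const' {α : Type*} (B : Finset α) (P : α → Prop)
    [DecidablePred P] (a : ℝ) :
    (∑ ρ ∈ B, if P ρ then a else 0) = ((B.filter P).card : ℝ) * a := by
  rw [← Finset.sum_filter, Finset.sum_const, nsmul_eq_mul]

private lemma L1' (g x y a s q : ℕ) (hq : 0 < q) (hs : s + 1 ≤ q) (hxy : x + y ≤ s)
    (ha : a ≤ g + y) : (a : ℝ)/q - 1 ≤ (g : ℝ)/((s:ℝ)+1) - (x : ℝ)/s := by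
  have hq' : (0:ℝ) < q := by exact_mod_cast hq
  have hs1 : (0:ℝ) < (s:ℝ)+1 := by positivity
  have hgq : (g:ℝ)/q ≤ (g:ℝ)/((s:ℝ)+1) := by
    apply div_le_div_of_nonneg_left (by positivity) hs1 (by exact_mod_cast hs)
  rcases Nat.eq_zero_or_pos s with h0 | hspos
  · have hx : x = 0 := by omega
    have hag : (a:ℝ) ≤ (g:ℝ) := by exact_mod_cast (by omega : a ≤ g)
    have haq : (a:ℝ)/q ≤ (a:ℝ) := div_le_self (by positivity) (by exact_mod_cast hq)
    rw [hx, h0]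
    norm_num
    linarith
  · have hs' : (0:ℝ) < (s:ℝ) := by exact_mod_cast hspos
    have key : (a:ℝ) + x ≤ (g:ℝ) + s := by exact_mod_cast (by omega : a + x ≤ g + s)
    have c1 : ((a:ℝ)-g)/q ≤ ((s:ℝ)-x)/q := by
      apply (div_le_div_iff_of_pos_right hq').mpr; linarith
    have c2 : ((s:ℝ)-x)/q ≤ ((s:ℝ)-x)/s := by
      apply div_le_div_of_nonneg_left ?_ hs' (by exact_mod_cast (by omega : s ≤ q))
      have : (x:ℝ) ≤ s := by exact_mod_cast (by omega : x ≤ s)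
      linarith
    have c3 : ((s:ℝ)-x)/s = 1 - (x:ℝ)/s := by field_simp
    have c4 : ((a:ℝ)-g)/q = (a:ℝ)/q - (g:ℝ)/q := sub_div _ _ _
    linarith

private lemma L2' (g s τ q : ℕ) (hq : 0 < q) (hs : s + 1 ≤ q) (hg : τ ≤ s + g) :
    ((τ:ℝ)+1)/q - 1 ≤ (g:ℝ)/((s:ℝ)+1) := by
  have hq' : (0:ℝ) < q := by exact_mod_cast hq
  have hs1 : (0:ℝ) < (s:ℝ)+1 := by positivity
  have h2 : ((τ:ℝ)+1)/q ≤ ((g:ℝ)+((s:ℝ)+1))/((s:ℝ)+1) := by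
    rw [div_le_div_iff₀ hq' hs1]
    have h3 : (τ:ℝ)+1 ≤ (g:ℝ)+((s:ℝ)+1) := by
      have : (τ:ℝ) ≤ (s:ℝ) + g := by exact_mod_cast hg
      linarith
    calc ((τ:ℝ)+1) * ((s:ℝ)+1) ≤ ((g:ℝ)+((s:ℝ)+1)) * ((s:ℝ)+1) :=
          mul_le_mul_of_nonneg_right h3 (le_of_lt hs1)
      _ ≤ ((g:ℝ)+((s:ℝ)+1)) * q := by
          apply mul_le_mul_of_nonneg_left (by exact_mod_cast hs) (by positivity)
  have h4 : ((g:ℝ)+((s:ℝ)+1))/((s:ℝ)+1) = (g:ℝ)/((s:ℝ)+1) + 1 := by field_simp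
  linarith

private lemma L3' (g x y s : ℕ) (hxy : x + y ≤ s) :
    (-1:ℝ) ≤ (g:ℝ)/((s:ℝ)+1) - (x:ℝ)/s := by
  have hg : (0:ℝ) ≤ (g:ℝ)/((s:ℝ)+1) := by positivity
  rcases Nat.eq_zero_or_pos s with h0 | hs
  · have hx : x = 0 := by omega
    rw [hx, h0]; norm_num; linarith
  · have hs' : (0:ℝ) < (s:ℝ) := by exact_mod_cast hs
    have : (x:ℝ)/s ≤ 1 := by
      rw [div_le_one hs']; exact_mod_cast (by omega : x ≤ s)
    linarith

/-- satisfaction count of a single voter -/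
private def satI (A : Fin n → Fin ℓ → Finset C) (o : Fin ℓ → C) (i : Fin n) : ℕ :=
  (univ.filter fun t => o t ∈ A i t).card

private lemma satI_eq (A : Fin n → Fin ℓ → Finset C) (o : Fin ℓ → C) (i : Fin n) :
    satR A {i} univ o = satI A o i := by
  simp [satR, satI, Finset.singleton_biUnion]

/-- marginal change of voter `i`'s harmonic utility when round `ρ` is changed to `d` -/
private noncomputable def dlt (A : Fin n → Fin ℓ → Finset C) (o : Fin ℓ → C)
    (ρ : Fin ℓ) (d : C) (i : Fin n) : ℝ :=
  (if d ∈ A i ρ ∧ o ρ ∉ A i ρ then 1/((satI A o i : ℝ)+1) else 0)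
  - (if o ρ ∈ A i ρ ∧ d ∉ A i ρ then 1/(satI A o i : ℝ) else 0)

private lemma count_update (A : Fin n → Fin ℓ → Finset C) (o : Fin ℓ → C)
    (i : Fin n) (ρ : Fin ℓ) (d : C) :
    satR A {i} univ (Function.update o ρ d) + (if o ρ ∈ A i ρ then 1 else 0)
      = satI A o i + (if d ∈ A i ρ then 1 else 0) := by
  have hgen : ∀ f : Fin ℓ → C, satR A {i} univ f
      = (if f ρ ∈ A i ρ then 1 else 0)
        + ∑ t ∈ univ.erase ρ, (if f t ∈ A i t then 1 else 0) := by
    intro f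
    simp only [satR, Finset.singleton_biUnion]
    rw [Finset.card_filter]
    exact (Finset.add_sum_erase univ _ (mem_univ ρ)).symm
  have h1 := hgen (Function.update o ρ d)
  have h2 := hgen o
  have hupd : ∀ t ∈ univ.erase ρ,
      (if Function.update o ρ d t ∈ A i t then 1 else 0)
        = (if o t ∈ A i t then 1 else 0) := by
    intro t ht
    rw [Function.update_of_ne (Finset.ne_of_mem_erase ht)]
  rw [Finset.sum_congr rfl hupd, Function.update_self] at h1
  rw [h1, ← satI_eq, h2]
  split_ifs <;> omega

private lemma H_update (A : Fin n → Fin ℓ → Finset C) (o : Fin ℓ → C)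
    (ρ : Fin ℓ) (d : C) (i : Fin n) :
    (∑ j ∈ Finset.range (satR A {i} univ (Function.update o ρ d)), (1:ℝ)/(j+1))
      = (∑ j ∈ Finset.range (satI A o i), (1:ℝ)/(j+1)) + dlt A o ρ d i := by
  have hcnt := count_update A o i ρ d
  by_cases hd : d ∈ A i ρ <;> by_cases ho : o ρ ∈ A i ρ
  · have hs : satR A {i} univ (Function.update o ρ d) = satI A o i := by
      simp only [hd, ho, if_true] at hcnt; omega
    rw [hs]
    simp [dlt, hd, ho]
  · have hs : satR A {i} univ (Function.update o ρ d) = satI A o i + 1 := by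
      simp only [hd, ho, if_true, if_false] at hcnt; omega
    rw [hs, Finset.sum_range_succ]
    simp [dlt, hd, ho]
  · have hs : satI A o i = satR A {i} univ (Function.update o ρ d) + 1 := by
      simp only [hd, ho, if_true, if_false] at hcnt; omega
    rw [hs, Finset.sum_range_succ]
    have hcast : ((satR A {i} univ (Function.update o ρ d) : ℝ) + 1)
        = ((satI A o i : ℕ) : ℝ) := by
      rw [hs]; push_cast; ring
    simp only [dlt, hd, ho, not_true, not_false_iff, and_true, and_false, true_and,
      false_and, if_false, if_true]
    rw [hcast]
    ring
  · have hs : satR A {i} univ (Function.update o ρ d) = satI A o i := by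
      simp only [hd, ho, if_false] at hcnt; omega
    rw [hs]
    simp [dlt, hd, ho]

private lemma score_update (A : Fin n → Fin ℓ → Finset C) (o : Fin ℓ → C)
    (ρ : Fin ℓ) (d : C) :
    harmonicScore A (Function.update o ρ d) = harmonicScore A o + ∑ i, dlt A o ρ d i := by
  rw [harmonicScore, harmonicScore, ← Finset.sum_add_distrib]
  refine Finset.sum_congr rfl fun i _ => ?_
  rw [satI_eq A o i]
  exact H_update A o ρ d i

/-- counts over the deviation round set -/
private def gBf (A : Fin n → Fin ℓ → Finset C) (o : Fin ℓ → C) (w : Fin ℓ → C)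
    (B : Finset (Fin ℓ)) (i : Fin n) : ℕ :=
  (B.filter fun ρ => w ρ ∈ A i ρ ∧ o ρ ∉ A i ρ).card

private def xBf (A : Fin n → Fin ℓ → Finset C) (o : Fin ℓ → C) (w : Fin ℓ → C)
    (B : Finset (Fin ℓ)) (i : Fin n) : ℕ :=
  (B.filter fun ρ => o ρ ∈ A i ρ ∧ w ρ ∉ A i ρ).card

private def yBf (A : Fin n → Fin ℓ → Finset C) (o : Fin ℓ → C) (w : Fin ℓ → C)
    (B : Finset (Fin ℓ)) (i : Fin n) : ℕ :=
  (B.filter fun ρ => o ρ ∈ A i ρ ∧ w ρ ∈ A i ρ).card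

private def aBf (A : Fin n → Fin ℓ → Finset C) (o : Fin ℓ → C) (w : Fin ℓ → C)
    (B : Finset (Fin ℓ)) (i : Fin n) : ℕ :=
  (B.filter fun ρ => w ρ ∈ A i ρ).card

private lemma dlt_decomp (A : Fin n → Fin ℓ → Finset C) (o w : Fin ℓ → C)
    (B : Finset (Fin ℓ)) (i : Fin n) :
    ∑ ρ ∈ B, dlt A o ρ (w ρ) i
      = (gBf A o w B i : ℝ) * (1/((satI A o i:ℝ)+1))
        - (xBf A o w B i : ℝ) * (1/(satI A o i:ℝ)) := by
  simp only [dlt]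
  rw [Finset.sum_sub_distrib, sum_ite_const', sum_ite_const']
  rfl

private lemma f1b (A : Fin n → Fin ℓ → Finset C) (o w : Fin ℓ → C)
    (B : Finset (Fin ℓ)) (i : Fin n) :
    xBf A o w B i + yBf A o w B i ≤ satI A o i := by
  have hdisj : Disjoint (B.filter fun ρ => o ρ ∈ A i ρ ∧ w ρ ∉ A i ρ)
      (B.filter fun ρ => o ρ ∈ A i ρ ∧ w ρ ∈ A i ρ) := by
    rw [Finset.disjoint_left]
    intro ρ h1 h2
    simp only [Finset.mem_filter] at h1 h2
    exact h1.2.2 h2.2.2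
  have hxy : xBf A o w B i + yBf A o w B i
      = ((B.filter fun ρ => o ρ ∈ A i ρ ∧ w ρ ∉ A i ρ)
        ∪ (B.filter fun ρ => o ρ ∈ A i ρ ∧ w ρ ∈ A i ρ)).card :=
    (Finset.card_union_of_disjoint hdisj).symm
  have hsub : ((B.filter fun ρ => o ρ ∈ A i ρ ∧ w ρ ∉ A i ρ)
      ∪ (B.filter fun ρ => o ρ ∈ A i ρ ∧ w ρ ∈ A i ρ))
        ⊆ univ.filter fun t => o t ∈ A i t := by
    intro ρ hρ
    simp only [Finset.mem_union, Finset.mem_filter] at hρ ⊢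
    constructor
    · exact mem_univ ρ
    · tauto
  rw [hxy]
  exact Finset.card_le_card hsub

private lemma f1a (A : Fin n → Fin ℓ → Finset C) (o w : Fin ℓ → C)
    (B : Finset (Fin ℓ)) (r : Fin ℓ) (hrB : r ∉ B) (i : Fin n) (ho : o r ∈ A i r) :
    xBf A o w B i + yBf A o w B i + 1 ≤ satI A o i := by
  have hdisj : Disjoint (B.filter fun ρ => o ρ ∈ A i ρ ∧ w ρ ∉ A i ρ)
      (B.filter fun ρ => o ρ ∈ A i ρ ∧ w ρ ∈ A i ρ) := by
    rw [Finset.disjoint_left]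
    intro ρ h1 h2
    simp only [Finset.mem_filter] at h1 h2
    exact h1.2.2 h2.2.2
  have hxy : xBf A o w B i + yBf A o w B i
      = ((B.filter fun ρ => o ρ ∈ A i ρ ∧ w ρ ∉ A i ρ)
        ∪ (B.filter fun ρ => o ρ ∈ A i ρ ∧ w ρ ∈ A i ρ)).card :=
    (Finset.card_union_of_disjoint hdisj).symm
  have hrU : r ∉ ((B.filter fun ρ => o ρ ∈ A i ρ ∧ w ρ ∉ A i ρ)
      ∪ (B.filter fun ρ => o ρ ∈ A i ρ ∧ w ρ ∈ A i ρ)) := by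
    intro hmem
    rcases Finset.mem_union.mp hmem with h | h
    · exact hrB (Finset.mem_of_mem_filter r h)
    · exact hrB (Finset.mem_of_mem_filter r h)
  have hsub : insert r ((B.filter fun ρ => o ρ ∈ A i ρ ∧ w ρ ∉ A i ρ)
      ∪ (B.filter fun ρ => o ρ ∈ A i ρ ∧ w ρ ∈ A i ρ))
        ⊆ univ.filter fun t => o t ∈ A i t := by
    intro ρ hρ
    rcases Finset.mem_insert.mp hρ with h | h
    · subst h; exact Finset.mem_filter.mpr ⟨mem_univ _, ho⟩
    · rcases Finset.mem_union.mp h with h' | h'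
      · exact Finset.mem_filter.mpr ⟨mem_univ _, (Finset.mem_filter.mp h').2.1⟩
      · exact Finset.mem_filter.mpr ⟨mem_univ _, (Finset.mem_filter.mp h').2.1⟩
  have := Finset.card_le_card hsub
  rw [Finset.card_insert_of_notMem hrU] at this
  rw [hxy]
  exact this

private lemma f2' (A : Fin n → Fin ℓ → Finset C) (o w : Fin ℓ → C)
    (B : Finset (Fin ℓ)) (i : Fin n) :
    aBf A o w B i ≤ gBf A o w B i + yBf A o w B i := by
  have hsub : (B.filter fun ρ => w ρ ∈ A i ρ)
      ⊆ (B.filter fun ρ => w ρ ∈ A i ρ ∧ o ρ ∉ A i ρ)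
        ∪ (B.filter fun ρ => o ρ ∈ A i ρ ∧ w ρ ∈ A i ρ) := by
    intro ρ hρ
    simp only [Finset.mem_union, Finset.mem_filter] at hρ ⊢
    by_cases ho : o ρ ∈ A i ρ
    · right; exact ⟨hρ.1, ho, hρ.2⟩
    · left; exact ⟨hρ.1, hρ.2, ho⟩
  calc aBf A o w B i ≤ ((B.filter fun ρ => w ρ ∈ A i ρ ∧ o ρ ∉ A i ρ)
        ∪ (B.filter fun ρ => o ρ ∈ A i ρ ∧ w ρ ∈ A i ρ)).card := Finset.card_le_card hsub
    _ ≤ gBf A o w B i + yBf A o w B i := Finset.card_union_le _ _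

private lemma dlt_gain (A : Fin n → Fin ℓ → Finset C) (o : Fin ℓ → C)
    (ρ : Fin ℓ) (d : C) (i : Fin n) (hd : d ∈ A i ρ) (ho : o ρ ∉ A i ρ) :
    dlt A o ρ d i = 1/((satI A o i : ℝ)+1) := by
  simp [dlt, hd, ho]

private lemma dlt_loss (A : Fin n → Fin ℓ → Finset C) (o : Fin ℓ → C)
    (ρ : Fin ℓ) (d : C) (i : Fin n) (ho : o ρ ∈ A i ρ) (hd : d ∉ A i ρ) :
    dlt A o ρ d i = -(1/(satI A o i : ℝ)) := by
  simp [dlt, hd, ho]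

private lemma dlt_zero (A : Fin n → Fin ℓ → Finset C) (o : Fin ℓ → C)
    (ρ : Fin ℓ) (d : C) (i : Fin n) (h : d ∈ A i ρ ↔ o ρ ∈ A i ρ) :
    dlt A o ρ d i = 0 := by
  by_cases hd : d ∈ A i ρ
  · have ho : o ρ ∈ A i ρ := h.mp hd
    simp [dlt, hd, ho]
  · have ho : o ρ ∉ A i ρ := fun hh => hd (h.mpr hh)
    simp [dlt, hd, ho]

end Aux

/-- Every temporal election admits an outcome providing EJR+; in particular,
any outcome maximizing the harmonic score provides EJR+. -/
theorem exists_EJRplus_outcome {C : Type*} [Fintype C] [Nonempty C] [DecidableEq C] {n ℓ : ℕ}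
    (hℓ : 1 ≤ ℓ) (A : Fin n → Fin ℓ → Finset C) :
    (∃ o : Fin ℓ → C, providesEJRplus A o) ∧
    (∀ o : Fin ℓ → C, (∀ o' : Fin ℓ → C, harmonicScore A o' ≤ harmonicScore A o) →
      providesEJRplus A o) := by
  classical
  have main : ∀ o : Fin ℓ → C, (∀ o' : Fin ℓ → C, harmonicScore A o' ≤ harmonicScore A o) →
      providesEJRplus A o := by
    intro o hopt σ τ hσ1 hσn hτ1 hτℓ S hcoh r hex
    obtain ⟨c, hc⟩ := hex
    by_contra hcon
    push_neg at hcon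
    obtain ⟨hno, i₀, hi₀S, hi₀⟩ := hcon
    set q : ℕ := τ * σ / n with hq_def
    have hsatlt : ∀ i ∈ S, satI A o i < q := by
      intro i hi
      have := hno i hi
      rwa [satI_eq] at this
    have hq : 0 < q := by
      rcases Nat.eq_zero_or_pos q with h | h
      · exact absurd (hsatlt i₀ hi₀S) (by omega)
      · exact h
    have hq' : (0:ℝ) < (q:ℝ) := by exact_mod_cast hq
    have hn : 0 < n := lt_of_lt_of_le hσ1 hσn
    have hnq : n * q ≤ τ * σ := by
      rw [hq_def, mul_comm]; exact Nat.div_mul_le_self _ _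
    obtain ⟨R, hRcard, hRw⟩ := hcoh
    have hwex : ∀ ρ : Fin ℓ, ∃ d : C, ρ ∈ R → σ ≤ (S.filter fun i => d ∈ A i ρ).card := by
      intro ρ
      by_cases h : ρ ∈ R
      · obtain ⟨d, hd⟩ := hRw ρ h; exact ⟨d, fun _ => hd⟩
      · exact ⟨Classical.arbitrary C, fun h' => absurd h' h⟩
    choose w hw using hwex
    set B : Finset (Fin ℓ) := R.erase r with hB_def
    have hrB : r ∉ B := Finset.notMem_erase r R
    have hwB : ∀ ρ ∈ B, σ ≤ (S.filter fun i => w ρ ∈ A i ρ).card :=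
      fun ρ hρ => hw ρ (Finset.mem_of_mem_erase hρ)
    have hΔ : ∀ (ρ : Fin ℓ) (d : C), (∑ i, dlt A o ρ d i) ≤ 0 := by
      intro ρ d
      have h1 : harmonicScore A (Function.update o ρ d) ≤ harmonicScore A o := hopt _
      rw [score_update] at h1
      linarith
    have hsq : ∀ i ∈ S, satI A o i + 1 ≤ q := fun i hi => hsatlt i hi
    have hT0 : (∑ ρ ∈ B, ∑ i, dlt A o ρ (w ρ) i) + (∑ i, dlt A o r c i) ≤ 0 :=
      add_nonpos (Finset.sum_nonpos fun ρ _ => hΔ ρ (w ρ)) (hΔ r c)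
    have hTswap : (∑ ρ ∈ B, ∑ i, dlt A o ρ (w ρ) i) + (∑ i, dlt A o r c i)
        = ∑ i, ((∑ ρ ∈ B, dlt A o ρ (w ρ) i) + dlt A o r c i) := by
      rw [Finset.sum_comm, ← Finset.sum_add_distrib]
    -- bound for non-S voters
    have hlb : ∀ i, i ∉ S → (-1:ℝ) ≤ (∑ ρ ∈ B, dlt A o ρ (w ρ) i) + dlt A o r c i := by
      intro i _
      rw [dlt_decomp]
      by_cases hcase : o r ∈ A i r ∧ c ∉ A i r
      · rw [dlt_loss A o r c i hcase.1 hcase.2]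
        have hL3 := L3' (gBf A o w B i) (xBf A o w B i + 1) (yBf A o w B i) (satI A o i)
          (by have := f1a A o w B r hrB i hcase.1; omega)
        push_cast at hL3
        have h1 : ((gBf A o w B i:ℕ):ℝ)/((satI A o i:ℝ)+1)
            = ((gBf A o w B i:ℕ):ℝ) * (1/((satI A o i:ℝ)+1)) := by ring
        have h2 : (((xBf A o w B i:ℕ):ℝ) + 1)/((satI A o i:ℕ):ℝ)
            = ((xBf A o w B i:ℕ):ℝ) * (1/((satI A o i:ℕ):ℝ)) + 1/((satI A o i:ℕ):ℝ) := by
          ring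
        linarith
      · have hδe : (0:ℝ) ≤ dlt A o r c i := by
          rw [dlt]
          rw [if_neg hcase]
          have : (0:ℝ) ≤ (if c ∈ A i r ∧ o r ∉ A i r then 1/((satI A o i:ℝ)+1) else 0) := by
            positivity
          linarith
        have hL3 := L3' (gBf A o w B i) (xBf A o w B i) (yBf A o w B i) (satI A o i)
          (f1b A o w B i)
        have h1 : ((gBf A o w B i:ℕ):ℝ)/((satI A o i:ℝ)+1)
            = ((gBf A o w B i:ℕ):ℝ) * (1/((satI A o i:ℝ)+1)) := by ring
        have h2 : ((xBf A o w B i:ℕ):ℝ)/((satI A o i:ℕ):ℝ)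
            = ((xBf A o w B i:ℕ):ℝ) * (1/((satI A o i:ℕ):ℝ)) := by ring
        linarith
    -- S-voter bound, general (non-tight) form
    have hbS : ∀ i ∈ S, ((aBf A o w B i + 1 : ℕ):ℝ)/q - 1
        ≤ (∑ ρ ∈ B, dlt A o ρ (w ρ) i) + dlt A o r c i := by
      intro i hi
      have hci : c ∈ A i r := hc i hi
      rw [dlt_decomp]
      by_cases ho : o r ∈ A i r
      · rw [dlt_zero A o r c i (iff_of_true hci ho)]
        have key := L1' (gBf A o w B i) (xBf A o w B i) (yBf A o w B i + 1)
          (aBf A o w B i + 1) (satI A o i) q hq (hsq i hi)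
          (by have := f1a A o w B r hrB i ho; omega)
          (by have := f2' A o w B i; omega)
        have h1 : ((gBf A o w B i:ℕ):ℝ)/((satI A o i:ℝ)+1)
            = ((gBf A o w B i:ℕ):ℝ) * (1/((satI A o i:ℝ)+1)) := by ring
        have h2 : ((xBf A o w B i:ℕ):ℝ)/((satI A o i:ℕ):ℝ)
            = ((xBf A o w B i:ℕ):ℝ) * (1/((satI A o i:ℕ):ℝ)) := by ring
        rw [h1, h2] at key
        linarith
      · rw [dlt_gain A o r c i hci ho]
        have key := L1' (gBf A o w B i + 1) (xBf A o w B i) (yBf A o w B i)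
          (aBf A o w B i + 1) (satI A o i) q hq (hsq i hi)
          (f1b A o w B i)
          (by have := f2' A o w B i; omega)
        have h1 : ((gBf A o w B i + 1:ℕ):ℝ)/((satI A o i:ℝ)+1)
            = ((gBf A o w B i:ℕ):ℝ) * (1/((satI A o i:ℝ)+1)) + 1/((satI A o i:ℝ)+1) := by
          push_cast; ring
        have h2 : ((xBf A o w B i:ℕ):ℝ)/((satI A o i:ℕ):ℝ)
            = ((xBf A o w B i:ℕ):ℝ) * (1/((satI A o i:ℕ):ℝ)) := by ring
        rw [h1, h2] at key
        linarith
    -- count of witness approvals within S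
    have hsumaB : B.card * σ ≤ ∑ i ∈ S, aBf A o w B i := by
      have h1 : ∑ i ∈ S, aBf A o w B i = ∑ ρ ∈ B, (S.filter fun i => w ρ ∈ A i ρ).card := by
        calc ∑ i ∈ S, aBf A o w B i
            = ∑ i ∈ S, ∑ ρ ∈ B, (if w ρ ∈ A i ρ then 1 else 0) := by
              refine Finset.sum_congr rfl fun i _ => ?_
              rw [aBf]; exact Finset.card_filter _ _
          _ = ∑ ρ ∈ B, ∑ i ∈ S, (if w ρ ∈ A i ρ then 1 else 0) := Finset.sum_comm
          _ = ∑ ρ ∈ B, (S.filter fun i => w ρ ∈ A i ρ).card := by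
              refine Finset.sum_congr rfl fun ρ _ => (Finset.card_filter _ _).symm
      rw [h1]
      calc B.card * σ = ∑ _ρ ∈ B, σ := by rw [Finset.sum_const, smul_eq_mul]
        _ ≤ ∑ ρ ∈ B, (S.filter fun i => w ρ ∈ A i ρ).card := Finset.sum_le_sum hwB
    have hScard : S.card ≤ n := by
      have := Finset.card_le_card (Finset.subset_univ S)
      simpa using this
    have h1S : 1 ≤ S.card := Finset.card_pos.mpr ⟨i₀, hi₀S⟩
    have hRne : R.Nonempty := Finset.card_pos.mp (by omega)
    have hσS : σ ≤ S.card := by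
      obtain ⟨ρ₀, hρ₀⟩ := hRne
      exact le_trans (hw ρ₀ hρ₀) (Finset.card_le_card (Finset.filter_subset _ _))
    -- the "non-tight" finisher
    have finish_nontight : n * q + 1 ≤ (∑ i ∈ S, (aBf A o w B i + 1)) → False := by
      intro hf3
      have hSsum : ((n:ℝ)*q + 1)/q - S.card
          ≤ ∑ i ∈ S, ((∑ ρ ∈ B, dlt A o ρ (w ρ) i) + dlt A o r c i) := by
        calc ((n:ℝ)*q+1)/q - S.card
            ≤ ((∑ i ∈ S, (aBf A o w B i + 1) : ℕ):ℝ)/q - S.card := by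
              apply sub_le_sub_right
              apply (div_le_div_iff_of_pos_right hq').mpr
              exact_mod_cast hf3
          _ = ∑ i ∈ S, (((aBf A o w B i + 1:ℕ):ℝ)/q - 1) := by
              rw [Finset.sum_sub_distrib, ← Finset.sum_div, Finset.sum_const, nsmul_eq_mul,
                mul_one]
              congr 2
              push_cast
              rfl
          _ ≤ _ := Finset.sum_le_sum hbS
      have hCsum : -((n:ℝ) - S.card)
          ≤ ∑ i ∈ Sᶜ, ((∑ ρ ∈ B, dlt A o ρ (w ρ) i) + dlt A o r c i) := by
        have hbd : ∀ i ∈ Sᶜ, (-1:ℝ) ≤ (∑ ρ ∈ B, dlt A o ρ (w ρ) i) + dlt A o r c i :=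
          fun i hi => hlb i (Finset.mem_compl.mp hi)
        calc -((n:ℝ) - S.card) = (Sᶜ.card : ℝ) * (-1) := by
              rw [Finset.card_compl, Fintype.card_fin]
              rw [Nat.cast_sub hScard]
              ring
          _ = ∑ _i ∈ Sᶜ, (-1:ℝ) := by rw [Finset.sum_const, nsmul_eq_mul]
          _ ≤ _ := Finset.sum_le_sum hbd
      have hsplit : ∑ i, ((∑ ρ ∈ B, dlt A o ρ (w ρ) i) + dlt A o r c i)
          = (∑ i ∈ S, ((∑ ρ ∈ B, dlt A o ρ (w ρ) i) + dlt A o r c i))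
            + ∑ i ∈ Sᶜ, ((∑ ρ ∈ B, dlt A o ρ (w ρ) i) + dlt A o r c i) :=
        (Finset.sum_add_sum_compl S _).symm
      have hval : ((n:ℝ)*q+1)/q = (n:ℝ) + 1/q := by
        rw [add_div, mul_div_assoc, div_self (ne_of_gt hq'), mul_one]
      have hpos : (0:ℝ) < 1/q := by positivity
      rw [hTswap, hsplit] at hT0
      rw [hval] at hSsum
      linarith
    -- case analysis
    by_cases hrR : r ∈ R
    · by_cases hSσ : S.card = σ
      · -- tight case: everyone in S approves every witness
        have hall : ∀ ρ ∈ B, ∀ i ∈ S, w ρ ∈ A i ρ := by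
          intro ρ hρ i hi
          have h1 : (S.filter fun i => w ρ ∈ A i ρ) = S := by
            apply Finset.eq_of_subset_of_card_le (Finset.filter_subset _ _)
            rw [hSσ]; exact hwB ρ hρ
          have : i ∈ S.filter fun i => w ρ ∈ A i ρ := h1.symm ▸ hi
          exact (Finset.mem_filter.mp this).2
        have hBcard : B.card + 1 = τ := by
          rw [hB_def, Finset.card_erase_of_mem hrR, hRcard]; omega
        -- per-voter tight bound
        have hbS_t : ∀ i ∈ S, ((τ:ℝ)+1)/q - 1
            ≤ (∑ ρ ∈ B, dlt A o ρ (w ρ) i) + dlt A o r c i := by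
          intro i hi
          have hci : c ∈ A i r := hc i hi
          have hxB0 : xBf A o w B i = 0 := by
            rw [xBf]
            simp only [Finset.card_eq_zero]
            apply Finset.filter_false_of_mem
            intro ρ hρ
            push_neg
            intro _
            exact hall ρ hρ i hi
          have haBfull : aBf A o w B i = B.card := by
            rw [aBf]
            congr 1
            apply Finset.filter_true_of_mem
            intro ρ hρ
            exact hall ρ hρ i hi
          rw [dlt_decomp, hxB0]
          by_cases ho : o r ∈ A i r
          · rw [dlt_zero A o r c i (iff_of_true hci ho)]
            have hτle : τ ≤ satI A o i + gBf A o w B i := by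
              have hf1 := f1a A o w B r hrB i ho
              have hf2 := f2' A o w B i
              omega
            have key := L2' (gBf A o w B i) (satI A o i) τ q hq (hsq i hi) hτle
            have h1 : ((gBf A o w B i:ℕ):ℝ)/((satI A o i:ℝ)+1)
                = ((gBf A o w B i:ℕ):ℝ) * (1/((satI A o i:ℝ)+1)) := by ring
            rw [h1] at key
            push_cast
            linarith
          · rw [dlt_gain A o r c i hci ho]
            have hτle : τ ≤ satI A o i + (gBf A o w B i + 1) := by
              have hf1 := f1b A o w B i
              have hf2 := f2' A o w B i
              omega
            have key := L2' (gBf A o w B i + 1) (satI A o i) τ q hq (hsq i hi) hτle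
            have h1 : ((gBf A o w B i + 1:ℕ):ℝ)/((satI A o i:ℝ)+1)
                = ((gBf A o w B i:ℕ):ℝ) * (1/((satI A o i:ℝ)+1)) + 1/((satI A o i:ℝ)+1) := by
              push_cast; ring
            rw [h1] at key
            push_cast
            linarith
        have hSsum : (σ:ℝ) * (((τ:ℝ)+1)/q - 1)
            ≤ ∑ i ∈ S, ((∑ ρ ∈ B, dlt A o ρ (w ρ) i) + dlt A o r c i) := by
          calc (σ:ℝ) * (((τ:ℝ)+1)/q - 1) = ∑ _i ∈ S, (((τ:ℝ)+1)/q - 1) := by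
                rw [Finset.sum_const, nsmul_eq_mul, hSσ]
            _ ≤ _ := Finset.sum_le_sum hbS_t
        have hCsum : -((n:ℝ) - σ)
            ≤ ∑ i ∈ Sᶜ, ((∑ ρ ∈ B, dlt A o ρ (w ρ) i) + dlt A o r c i) := by
          have hbd : ∀ i ∈ Sᶜ, (-1:ℝ) ≤ (∑ ρ ∈ B, dlt A o ρ (w ρ) i) + dlt A o r c i :=
            fun i hi => hlb i (Finset.mem_compl.mp hi)
          calc -((n:ℝ) - σ) = (Sᶜ.card : ℝ) * (-1) := by
                rw [Finset.card_compl, Fintype.card_fin, ← hSσ]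
                rw [Nat.cast_sub hScard]
                ring
            _ = ∑ _i ∈ Sᶜ, (-1:ℝ) := by rw [Finset.sum_const, nsmul_eq_mul]
            _ ≤ _ := Finset.sum_le_sum hbd
        have hsplit : ∑ i, ((∑ ρ ∈ B, dlt A o ρ (w ρ) i) + dlt A o r c i)
            = (∑ i ∈ S, ((∑ ρ ∈ B, dlt A o ρ (w ρ) i) + dlt A o r c i))
              + ∑ i ∈ Sᶜ, ((∑ ρ ∈ B, dlt A o ρ (w ρ) i) + dlt A o r c i) :=
          (Finset.sum_add_sum_compl S _).symm
        have hτσ1 : n*q + σ ≤ σ*(τ+1) := by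
          have e1 : σ*(τ+1) = τ*σ + σ := by ring
          omega
        have hstep : ((n:ℝ)*q + σ)/q ≤ ((σ:ℝ)*((τ:ℝ)+1))/q := by
          apply (div_le_div_iff_of_pos_right hq').mpr
          exact_mod_cast hτσ1
        have hval : ((n:ℝ)*q+σ)/q = (n:ℝ) + (σ:ℝ)/q := by
          rw [add_div, mul_div_assoc, div_self (ne_of_gt hq'), mul_one]
        have hposσ : (0:ℝ) < (σ:ℝ)/q := by
          apply div_pos ?_ hq'
          exact_mod_cast hσ1
        have hexp : (σ:ℝ) * (((τ:ℝ)+1)/q - 1) = ((σ:ℝ)*((τ:ℝ)+1))/q - σ := by ring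
        rw [hTswap, hsplit] at hT0
        rw [hexp] at hSsum
        rw [hval] at hstep
        linarith
      · -- r ∈ R but S strictly larger than σ
        apply finish_nontight
        have hBcard : B.card + 1 = τ := by
          rw [hB_def, Finset.card_erase_of_mem hrR, hRcard]; omega
        have hsum1 : ∑ i ∈ S, (aBf A o w B i + 1) = (∑ i ∈ S, aBf A o w B i) + S.card := by
          rw [Finset.sum_add_distrib, Finset.sum_const, smul_eq_mul, mul_one]
        have hσS' : σ + 1 ≤ S.card := by omega
        obtain ⟨m, hm⟩ : ∃ m, τ = m + 1 := ⟨τ - 1, by omega⟩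
        have hBm : B.card = m := by omega
        have he1 : (m+1)*σ = m*σ + σ := by ring
        have hsumaB' : m * σ ≤ ∑ i ∈ S, aBf A o w B i := by
          rw [← hBm]; exact hsumaB
        have hτσ : n * q ≤ (m+1) * σ := by rw [← hm]; exact hnq
        omega
    · -- r ∉ R
      apply finish_nontight
      have hBR : B = R := by rw [hB_def]; exact Finset.erase_eq_of_notMem hrR
      have hBcard : B.card = τ := by rw [hBR, hRcard]
      have hsum1 : ∑ i ∈ S, (aBf A o w B i + 1) = (∑ i ∈ S, aBf A o w B i) + S.card := by
        rw [Finset.sum_add_distrib, Finset.sum_const, smul_eq_mul, mul_one]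
      have hτσ : τ * σ ≤ ∑ i ∈ S, aBf A o w B i := by
        rw [← hBcard]; exact hsumaB
      omega
  refine ⟨?_, main⟩
  obtain ⟨o, ho⟩ := Finite.exists_max (harmonicScore A)
  exact ⟨o, main o ho⟩
end

section
/- For every temporal election E = (C, N, ℓ, A), every outcome o that provides weak extended justified representation+ (wEJR+) also provides weak extended justified representation (wEJR). -/
open Finset

/-- Weak extended justified representation+. -/
def providesWEJRplus {C : Type*} [DecidableEq C] {n ℓ : ℕ}
    (A : Fin n → Fin ℓ → Finset C) (o : Fin ℓ → C) : Prop :=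
  ∀ σ : ℕ, 1 ≤ σ → σ ≤ n →
    ∀ S : Finset (Fin n), cohesive A S σ ℓ →
    ∀ r : Fin ℓ, (∃ c : C, ∀ i ∈ S, c ∈ A i r) →
    (∃ i ∈ S, ℓ * σ / n ≤ satR A {i} univ o) ∨ (∀ i ∈ S, o r ∈ A i r)

/-- Weak extended justified representation. -/
def providesWEJR {C : Type*} [DecidableEq C] {n ℓ : ℕ}
    (A : Fin n → Fin ℓ → Finset C) (o : Fin ℓ → C) : Prop :=
  ∀ S : Finset (Fin n), S.Nonempty →
    (∀ r : Fin ℓ, ∃ c : C, ∀ i ∈ S, c ∈ A i r) →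
    ∃ i ∈ S, ℓ * S.card / n ≤ satR A {i} univ o


/-- Every outcome providing wEJR+ provides wEJR. -/
theorem wEJRplus_implies_wEJR {C : Type*} [Fintype C] [Nonempty C] [DecidableEq C] {n ℓ : ℕ}
    (hℓ : 1 ≤ ℓ) (A : Fin n → Fin ℓ → Finset C) (o : Fin ℓ → C)
    (h : providesWEJRplus A o) : providesWEJR A o := by
  intro S hS hagree
  obtain ⟨i0, hi0⟩ := hS
  have hσ1 : 1 ≤ S.card := Finset.card_pos.mpr ⟨i0, hi0⟩
  have hσn : S.card ≤ n := by
    simpa using Finset.card_le_card (Finset.subset_univ S)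
  have hn : 1 ≤ n := le_trans hσ1 hσn
  have hcoh : cohesive A S S.card ℓ := by
    refine ⟨Finset.univ, by simp, fun r _ => ?_⟩
    obtain ⟨c, hc⟩ := hagree r
    refine ⟨c, le_of_eq ?_⟩
    congr 1
    exact (Finset.filter_true_of_mem (fun i hi => hc i hi)).symm
  by_cases hL : ∃ i ∈ S, ℓ * S.card / n ≤ satR A {i} univ o
  · exact hL
  · exfalso
    have hall : ∀ r : Fin ℓ, ∀ i ∈ S, o r ∈ A i r := by
      intro r
      rcases h S.card hσ1 hσn S hcoh r (hagree r) with hl | hr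
      · exact absurd hl hL
      · exact hr
    refine hL ⟨i0, hi0, ?_⟩
    have hsat : satR A {i0} univ o = ℓ := by
      unfold satR
      rw [Finset.filter_true_of_mem]
      · simp
      · intro r _
        simp only [Finset.singleton_biUnion]
        exact hall r i0 hi0
    rw [hsat]
    calc ℓ * S.card / n ≤ ℓ * n / n := Nat.div_le_div_right (Nat.mul_le_mul_left ℓ hσn)
      _ = ℓ := Nat.mul_div_cancel ℓ hn
end

section
/- For every temporal election E = (C, N, ℓ, A), every outcome o that provides strong full justified representation (sFJR) also provides both strong extended justified representation (sEJR) and full justified representation (FJR). -/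
open Finset

/-- Strong full justified representation: some voter `i ∈ S` has satisfaction
at least `max_{R, |R| = ⌊ℓ|S|/n⌋} max_{o'_R} min_{j ∈ S} sat_j(o'_R)`. -/
def providesSFJR {C : Type*} [DecidableEq C] {n ℓ : ℕ}
    (A : Fin n → Fin ℓ → Finset C) (o : Fin ℓ → C) : Prop :=
  ∀ S : Finset (Fin n), S.Nonempty → ∃ i ∈ S,
    ∀ R : Finset (Fin ℓ), R.card = ℓ * S.card / n →
      ∀ o' : Fin ℓ → C, ∃ j ∈ S, satR A {j} R o' ≤ satR A {i} univ o

/-- Full justified representation: some voter `i ∈ S` has satisfaction at least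
`max_{T ⊆ [ℓ]} min_{R ⊆ T, |R| = ⌊|T||S|/n⌋} max_{o'_R} min_{j ∈ S} sat_j(o'_R)`. -/
def providesFJR {C : Type*} [DecidableEq C] {n ℓ : ℕ}
    (A : Fin n → Fin ℓ → Finset C) (o : Fin ℓ → C) : Prop :=
  ∀ S : Finset (Fin n), S.Nonempty → ∃ i ∈ S,
    ∀ T : Finset (Fin ℓ), ∃ R ⊆ T, R.card = T.card * S.card / n ∧
      ∀ o' : Fin ℓ → C, ∃ j ∈ S, satR A {j} R o' ≤ satR A {i} univ o


/-- Every outcome providing sFJR provides both sEJR and FJR. -/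
theorem sFJR_implies_sEJR_and_FJR {C : Type*} [Fintype C] [Nonempty C] [DecidableEq C] {n ℓ : ℕ}
    (hℓ : 1 ≤ ℓ) (A : Fin n → Fin ℓ → Finset C) (o : Fin ℓ → C)
    (h : providesSFJR A o) : providesSEJR A o ∧ providesFJR A o := by
  constructor
  · -- sEJR
    intro t ht S hS ⟨R, hRcard, hagree⟩
    obtain ⟨i, hiS, hi⟩ := h S hS
    have hn : 0 < n := by
      obtain ⟨x, _⟩ := hS; exact Fin.pos x
    set k := ℓ * S.card / n with hk
    have hkℓ : k ≤ ℓ := by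
      calc k ≤ ℓ * n / n := Nat.div_le_div_right
            (Nat.mul_le_mul_left ℓ (by simpa using S.card_le_univ))
        _ = ℓ := Nat.mul_div_cancel ℓ hn
    have hmt : min t k ≤ t := min_le_left _ _
    obtain ⟨R'', hR''R, hR''card⟩ :=
      Finset.exists_subset_card_eq (by rw [hRcard]; exact hmt : min t k ≤ R.card)
    have hR''k : R''.card ≤ k := by rw [hR''card]; exact min_le_right _ _
    obtain ⟨R', hR''R', hR'card⟩ :=
      Finset.exists_superset_card_eq hR''k (by simpa using hkℓ)
    classical
    set o' : Fin ℓ → C := fun r =>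
      if hr : r ∈ R'' then (hagree r (hR''R hr)).choose else Classical.arbitrary C with ho'
    obtain ⟨j, hjS, hj⟩ := hi R' hR'card o'
    refine ⟨i, hiS, le_trans ?_ hj⟩
    have hsub : R'' ⊆ R'.filter fun r => o' r ∈ ({j} : Finset (Fin n)).biUnion fun i => A i r := by
      intro r hr
      simp only [Finset.mem_filter, Finset.singleton_biUnion]
      refine ⟨hR''R' hr, ?_⟩
      simp only [ho', dif_pos hr]
      exact (hagree r (hR''R hr)).choose_spec j hjS
    calc min t k = R''.card := hR''card.symm
      _ ≤ _ := Finset.card_le_card hsub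
  · -- FJR
    intro S hS
    obtain ⟨i, hiS, hi⟩ := h S hS
    have hn : 0 < n := by
      obtain ⟨x, _⟩ := hS; exact Fin.pos x
    refine ⟨i, hiS, fun T => ?_⟩
    have hTk : T.card * S.card / n ≤ ℓ * S.card / n :=
      Nat.div_le_div_right (Nat.mul_le_mul_right _ (by simpa using T.card_le_univ))
    have hleT : T.card * S.card / n ≤ T.card := by
      calc T.card * S.card / n ≤ T.card * n / n := Nat.div_le_div_right
            (Nat.mul_le_mul_left _ (by simpa using S.card_le_univ))
        _ = T.card := Nat.mul_div_cancel _ hn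
    obtain ⟨R, hRT, hRcard⟩ := Finset.exists_subset_card_eq hleT
    refine ⟨R, hRT, hRcard, fun o' => ?_⟩
    have hkℓ : ℓ * S.card / n ≤ ℓ := by
      calc ℓ * S.card / n ≤ ℓ * n / n := Nat.div_le_div_right
            (Nat.mul_le_mul_left ℓ (by simpa using S.card_le_univ))
        _ = ℓ := Nat.mul_div_cancel ℓ hn
    obtain ⟨R', hRR', hR'card⟩ :=
      Finset.exists_superset_card_eq (hRcard ▸ hTk) (by simpa using hkℓ)
    obtain ⟨j, hjS, hj⟩ := hi R' hR'card o'
    refine ⟨j, hjS, le_trans ?_ hj⟩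
    exact Finset.card_le_card (Finset.filter_subset_filter _ hRR')
end

section
/- For every temporal election E = (C, N, ℓ, A), every outcome o that provides full justified representation (FJR) also provides both extended justified representation (EJR) and weak full justified representation (wFJR). -/
open Finset

/-- Extended justified representation. -/
def providesEJR {C : Type*} [DecidableEq C] {n ℓ : ℕ}
    (A : Fin n → Fin ℓ → Finset C) (o : Fin ℓ → C) : Prop :=
  ∀ t : ℕ, 0 < t → ∀ S : Finset (Fin n), S.Nonempty →
    (∃ R : Finset (Fin ℓ), R.card = t ∧ ∀ r ∈ R, ∃ c : C, ∀ i ∈ S, c ∈ A i r) →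
    ∃ i ∈ S, t * S.card / n ≤ satR A {i} univ o

/-- Weak full justified representation: some voter `i ∈ S` has satisfaction at
least `min_{R, |R| = ⌊ℓ|S|/n⌋} max_{o'_R} min_{j ∈ S} sat_j(o'_R)`. -/
def providesWFJR {C : Type*} [DecidableEq C] {n ℓ : ℕ}
    (A : Fin n → Fin ℓ → Finset C) (o : Fin ℓ → C) : Prop :=
  ∀ S : Finset (Fin n), S.Nonempty → ∃ i ∈ S,
    ∃ R : Finset (Fin ℓ), R.card = ℓ * S.card / n ∧
      ∀ o' : Fin ℓ → C, ∃ j ∈ S, satR A {j} R o' ≤ satR A {i} univ o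


/-- Every outcome providing FJR provides both EJR and wFJR. -/
theorem FJR_implies_EJR_and_wFJR {C : Type*} [Fintype C] [Nonempty C] [DecidableEq C] {n ℓ : ℕ}
    (hℓ : 1 ≤ ℓ) (A : Fin n → Fin ℓ → Finset C) (o : Fin ℓ → C)
    (h : providesFJR A o) : providesEJR A o ∧ providesWFJR A o := by
  constructor
  · intro t ht S hS ⟨R₀, hR₀card, hagree⟩
    obtain ⟨i, hi, hFJR⟩ := h S hS
    refine ⟨i, hi, ?_⟩
    obtain ⟨R, hRsub, hRcard, hR⟩ := hFJR R₀
    classical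
    set o' : Fin ℓ → C := fun r =>
      if hc : ∃ c : C, ∀ i ∈ S, c ∈ A i r then hc.choose else Classical.arbitrary C
    obtain ⟨j, hj, hsat⟩ := hR o'
    have hall : satR A {j} R o' = R.card := by
      unfold satR
      rw [Finset.filter_true_of_mem]
      intro r hr
      have hr0 := hRsub hr
      have hc := hagree r hr0
      have : o' r = hc.choose := by simp [o', dif_pos hc]
      rw [this]
      simp only [Finset.mem_biUnion, Finset.mem_singleton]
      exact ⟨j, rfl, hc.choose_spec j hj⟩
    rw [hall] at hsat
    calc t * S.card / n = R.card := by rw [hRcard, hR₀card]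
    _ ≤ satR A {i} univ o := hsat
  · intro S hS
    obtain ⟨i, hi, hFJR⟩ := h S hS
    obtain ⟨R, _, hRcard, hR⟩ := hFJR Finset.univ
    refine ⟨i, hi, R, ?_, fun o' => hR o'⟩
    rw [hRcard, Finset.card_univ, Fintype.card_fin]
end

section
/- Every temporal election E = (C, N, ℓ, A) admits an outcome that provides full justified representation (FJR). -/
open Finset

section Aux

variable {C : Type*} [Fintype C] [Nonempty C] [DecidableEq C] {n ℓ : ℕ}
  (A : Fin n → Fin ℓ → Finset C)

/-- `max_{o'} min_{j ∈ S} sat_j(o'|_R)`. -/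
noncomputable def bestV (S : Finset (Fin n)) (R : Finset (Fin ℓ)) : ℕ :=
  if h : S.Nonempty then
    (univ : Finset (Fin ℓ → C)).sup fun π => S.inf' h fun j => satR A {j} R π
  else 0

lemma exists_le_bestV (S : Finset (Fin n)) (R : Finset (Fin ℓ)) (hS : S.Nonempty)
    (π : Fin ℓ → C) : ∃ j ∈ S, satR A {j} R π ≤ bestV A S R := by
  obtain ⟨j, hj, hje⟩ := S.exists_mem_eq_inf' hS (fun j => satR A {j} R π)
  refine ⟨j, hj, ?_⟩
  unfold bestV
  rw [dif_pos hS, ← hje]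
  exact Finset.le_sup (f := fun π => S.inf' hS fun j => satR A {j} R π) (mem_univ π)

lemma exists_bestV_le (S : Finset (Fin n)) (R : Finset (Fin ℓ)) (hS : S.Nonempty) :
    ∃ π : Fin ℓ → C, ∀ j ∈ S, bestV A S R ≤ satR A {j} R π := by
  obtain ⟨π, _, hπ⟩ := Finset.exists_mem_eq_sup (univ : Finset (Fin ℓ → C))
    univ_nonempty (fun π => S.inf' hS fun j => satR A {j} R π)
  refine ⟨π, fun j hj => ?_⟩
  unfold bestV
  rw [dif_pos hS, hπ]
  exact Finset.inf'_le _ hj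

/-- `min_{R ⊆ T, |R| = ⌊|T||S|/n⌋} bestV S R`. -/
noncomputable def muV (S : Finset (Fin n)) (T : Finset (Fin ℓ)) : ℕ :=
  if h : (T.powersetCard (T.card * S.card / n)).Nonempty then
    (T.powersetCard (T.card * S.card / n)).inf' h (bestV A S)
  else 0

lemma muV_le (S : Finset (Fin n)) (T R : Finset (Fin ℓ))
    (hR : R ∈ T.powersetCard (T.card * S.card / n)) : muV A S T ≤ bestV A S R := by
  rw [muV, dif_pos ⟨R, hR⟩]
  exact Finset.inf'_le _ hR

lemma exists_eq_muV (S : Finset (Fin n)) (T : Finset (Fin ℓ))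
    (h : (T.powersetCard (T.card * S.card / n)).Nonempty) :
    ∃ R ∈ T.powersetCard (T.card * S.card / n), bestV A S R = muV A S T := by
  obtain ⟨R, hR, he⟩ := Finset.exists_mem_eq_inf' h (bestV A S)
  exact ⟨R, hR, by rw [muV, dif_pos h, he]⟩

/-- `max_T muV S T`. -/
noncomputable def wV (S : Finset (Fin n)) : ℕ :=
  (univ : Finset (Finset (Fin ℓ))).sup (muV A S)

lemma muV_le_wV (S : Finset (Fin n)) (T : Finset (Fin ℓ)) : muV A S T ≤ wV A S :=
  Finset.le_sup (mem_univ T)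

lemma exists_eq_wV (S : Finset (Fin n)) : ∃ T : Finset (Fin ℓ), muV A S T = wV A S := by
  obtain ⟨T, _, hT⟩ := Finset.exists_mem_eq_sup (univ : Finset (Finset (Fin ℓ)))
    ⟨∅, mem_univ ∅⟩ (muV A S)
  exact ⟨T, hT.symm⟩

/-- Greedy cohesive partition: a family of disjoint (in the sense of total size)
nonempty groups such that every nonempty `S ⊆ B` meets a group with at least its value. -/
lemma exists_partition (B : Finset (Fin n)) :
    ∃ F : Finset (Finset (Fin n)),
      (∀ G ∈ F, G.Nonempty) ∧ (∑ G ∈ F, G.card ≤ B.card) ∧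
      (∀ S : Finset (Fin n), S ⊆ B → S.Nonempty →
        ∃ G ∈ F, (G ∩ S).Nonempty ∧ wV A S ≤ wV A G) := by
  classical
  induction B using Finset.strongInduction with
  | _ B ih =>
    by_cases hB : B.Nonempty
    · set P := B.powerset.filter Finset.Nonempty with hP
      have hPne : P.Nonempty := ⟨B, by simp [hP, hB]⟩
      obtain ⟨S₀, hS₀P, hmax⟩ := P.exists_max_image (wV A) hPne
      rw [hP, mem_filter, mem_powerset] at hS₀P
      obtain ⟨hS₀B, hS₀ne⟩ := hS₀P
      obtain ⟨F', h1, h2, h3⟩ := ih (B \ S₀) (Finset.sdiff_ssubset hS₀B hS₀ne)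
      refine ⟨insert S₀ F', ?_, ?_, ?_⟩
      · intro G hG
        rcases Finset.mem_insert.1 hG with h | h
        · exact h ▸ hS₀ne
        · exact h1 G h
      · by_cases hmem : S₀ ∈ F'
        · rw [Finset.insert_eq_self.2 hmem]
          exact h2.trans (Finset.card_le_card (Finset.sdiff_subset))
        · rw [Finset.sum_insert hmem]
          have h5 : (B \ S₀).card = B.card - S₀.card := Finset.card_sdiff_of_subset hS₀B
          have h6 : S₀.card ≤ B.card := Finset.card_le_card hS₀B
          omega
      · intro S hSB hSne
        by_cases hint : (S₀ ∩ S).Nonempty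
        · refine ⟨S₀, Finset.mem_insert_self _ _, hint, ?_⟩
          exact hmax S (by simp [hP, Finset.mem_powerset.2 hSB, hSne])
        · have hsub : S ⊆ B \ S₀ := by
            intro x hx
            refine Finset.mem_sdiff.2 ⟨hSB hx, fun hx0 => hint ⟨x, Finset.mem_inter.2 ⟨hx0, hx⟩⟩⟩
          obtain ⟨G, hG, h4, h5⟩ := h3 S hsub hSne
          exact ⟨G, Finset.mem_insert_of_mem hG, h4, h5⟩
    · refine ⟨∅, by simp, by simp, ?_⟩
      intro S hSB hSne
      exact absurd (hSne.mono hSB) (by simpa using hB)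

end Aux

/-- Every temporal election admits an outcome that provides FJR. -/
theorem exists_FJR_outcome {C : Type*} [Fintype C] [Nonempty C] [DecidableEq C] {n ℓ : ℕ}
    (hℓ : 1 ≤ ℓ) (A : Fin n → Fin ℓ → Finset C) :
    ∃ o : Fin ℓ → C, providesFJR A o := by
  classical
  rcases Nat.eq_zero_or_pos n with hn | hn
  · subst hn
    refine ⟨fun _ => Classical.arbitrary C, fun S hS => ?_⟩
    obtain ⟨i, _⟩ := hS
    exact i.elim0
  obtain ⟨F, hFne, hFsum, hFcov⟩ := exists_partition A (univ : Finset (Fin n))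
  -- for each group choose the witness round-set `Tw G` attaining its value
  choose Tw hTw using exists_eq_wV A (ℓ := ℓ)
  set m : Finset (Fin n) → ℕ := fun G => (Tw G).card * G.card / n with hm
  -- Hall's theorem: disjoint representatives
  have hall : ∀ s : Finset ((G : {x // x ∈ F}) × Fin (m G.1)),
      s.card ≤ (s.biUnion fun x => Tw x.1.1).card := by
    intro s
    set K := s.image Sigma.fst with hK
    set U := (s.biUnion fun x => Tw x.1.1).card with hU
    have h1 : s.card ≤ ∑ G ∈ K, m G.1 := by
      calc s.card ≤ (K.sigma fun G => (univ : Finset (Fin (m G.1)))).card := by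
            refine Finset.card_le_card fun x hx => ?_
            exact Finset.mem_sigma.2 ⟨Finset.mem_image_of_mem _ hx, mem_univ _⟩
        _ = ∑ G ∈ K, m G.1 := by
            rw [Finset.card_sigma]
            simp
    have h2 : ∀ G ∈ K, (Tw G.1).card ≤ U := by
      intro G hG
      obtain ⟨x, hx, rfl⟩ := Finset.mem_image.1 hG
      exact Finset.card_le_card (Finset.subset_biUnion_of_mem (fun x => Tw x.1.1) hx)
    have h3 : ∑ G ∈ K, m G.1 ≤ ∑ G ∈ K, U * G.1.card / n := by
      refine Finset.sum_le_sum fun G hG => ?_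
      exact Nat.div_le_div_right (Nat.mul_le_mul_right _ (h2 G hG))
    have h4 : ∑ G ∈ K, U * G.1.card / n ≤ (∑ G ∈ K, U * G.1.card) / n := by
      rw [Nat.le_div_iff_mul_le hn, Finset.sum_mul]
      exact Finset.sum_le_sum fun G _ => Nat.div_mul_le_self _ _
    have h6 : ∑ G ∈ K, G.1.card ≤ n := by
      calc ∑ G ∈ K, G.1.card ≤ ∑ G : {x // x ∈ F}, G.1.card :=
            Finset.sum_le_sum_of_subset (Finset.subset_univ K)
        _ = ∑ G ∈ F, G.card := by rw [Finset.univ_eq_attach, Finset.sum_attach]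
        _ ≤ (univ : Finset (Fin n)).card := hFsum
        _ = n := by simp
    have h7 : (∑ G ∈ K, U * G.1.card) / n ≤ U := by
      rw [← Finset.mul_sum]
      calc U * (∑ G ∈ K, G.1.card) / n ≤ U * n / n :=
            Nat.div_le_div_right (Nat.mul_le_mul_left _ h6)
        _ = U := Nat.mul_div_cancel U hn
    omega
  obtain ⟨f, hfinj, hf⟩ :=
    (Finset.all_card_le_biUnion_card_iff_exists_injective
      (fun x : (G : {x // x ∈ F}) × Fin (m G.1) => Tw x.1.1)).1 hall
  -- the disjoint round-sets
  set R : {x // x ∈ F} → Finset (Fin ℓ) :=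
    fun G => (univ : Finset (Fin (m G.1))).image fun j => f ⟨G, j⟩ with hR
  have hRcard : ∀ G, (R G).card = m G.1 := by
    intro G
    have hinj : Function.Injective (fun j : Fin (m G.1) => f ⟨G, j⟩) :=
      fun a b hab => by simpa using hfinj hab
    rw [hR]
    simp only []
    rw [Finset.card_image_of_injective _ hinj]
    simp
  have hRsub : ∀ G, R G ⊆ Tw G.1 := by
    intro G r hr
    obtain ⟨j, _, rfl⟩ := Finset.mem_image.1 hr
    exact hf ⟨G, j⟩
  have hRdisj : ∀ G G', G ≠ G' → ∀ r, r ∈ R G → r ∈ R G' → False := by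
    intro G G' hne r hrG hrG'
    obtain ⟨j, _, hj⟩ := Finset.mem_image.1 hrG
    obtain ⟨j', _, hj'⟩ := Finset.mem_image.1 hrG'
    have : (⟨G, j⟩ : (G : {x // x ∈ F}) × Fin (m G.1)) = ⟨G', j'⟩ :=
      hfinj (hj.trans hj'.symm)
    exact hne (congrArg Sigma.fst this)
  -- good assignments for each group
  have hπ : ∀ G : {x // x ∈ F}, ∃ π : Fin ℓ → C,
      ∀ j ∈ G.1, bestV A G.1 (R G) ≤ satR A {j} (R G) π :=
    fun G => exists_bestV_le A _ _ (hFne G.1 G.2)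
  choose π hπ using hπ
  -- the outcome
  set o : Fin ℓ → C := fun r =>
    if h : ∃ G : {x // x ∈ F}, r ∈ R G then π h.choose r else Classical.arbitrary C with ho
  have key : ∀ (G : {x // x ∈ F}) (r : Fin ℓ), r ∈ R G → o r = π G r := by
    intro G r hr
    have hex : ∃ G' : {x // x ∈ F}, r ∈ R G' := ⟨G, hr⟩
    rw [ho]
    simp only [dif_pos hex]
    have : hex.choose = G := by
      by_contra hcon
      exact hRdisj _ _ hcon r hex.choose_spec hr
    rw [this]
  refine ⟨o, fun S hS => ?_⟩
  obtain ⟨G0, hG0F, hGS, hw⟩ := hFcov S (Finset.subset_univ S) hS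
  set Gs : {x // x ∈ F} := ⟨G0, hG0F⟩ with hGs
  obtain ⟨i, hi⟩ := hGS
  rw [Finset.mem_inter] at hi
  refine ⟨i, hi.2, fun T => ?_⟩
  have hσ : S.card ≤ n := by
    have := Finset.card_le_card (Finset.subset_univ S)
    simpa using this
  have hmle : T.card * S.card / n ≤ T.card := by
    calc T.card * S.card / n ≤ T.card * n / n :=
          Nat.div_le_div_right (Nat.mul_le_mul_left _ hσ)
      _ = T.card := Nat.mul_div_cancel _ hn
  have hpow : (T.powersetCard (T.card * S.card / n)).Nonempty :=
    Finset.powersetCard_nonempty.2 hmle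
  obtain ⟨R0, hR0, hbest⟩ := exists_eq_muV A S T hpow
  rw [Finset.mem_powersetCard] at hR0
  refine ⟨R0, hR0.1, hR0.2, fun o' => ?_⟩
  obtain ⟨j, hj, hjle⟩ := exists_le_bestV A S R0 hS o'
  refine ⟨j, hj, hjle.trans ?_⟩
  have c1 : bestV A S R0 ≤ wV A G0 := by
    rw [hbest]
    exact (muV_le_wV A S T).trans hw
  have c2 : wV A G0 ≤ bestV A G0 (R Gs) := by
    rw [← hTw G0]
    refine muV_le A G0 (Tw G0) (R Gs) ?_
    exact Finset.mem_powersetCard.2 ⟨hRsub Gs, hRcard Gs⟩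
  have c3 : bestV A G0 (R Gs) ≤ satR A {i} (R Gs) (π Gs) := hπ Gs i hi.1
  have c4 : satR A {i} (R Gs) (π Gs) = satR A {i} (R Gs) o := by
    unfold satR
    congr 1
    refine Finset.filter_congr fun r hr => ?_
    rw [key Gs r hr]
  have c5 : satR A {i} (R Gs) o ≤ satR A {i} univ o := by
    unfold satR
    exact Finset.card_le_card (Finset.filter_subset_filter _ (Finset.subset_univ _))
  omega
end

section
/- For every temporal election E = (C, N, ℓ, A): every outcome providing strong full justified representation (sFJR) also provides strong full proportional justified representation (sFPJR), and every outcome providing sFPJR also provides both strong proportional justified representation (sPJR) and full proportional justified representation (FPJR). -/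
open Finset

/-- Strong full proportional justified representation: the group satisfaction
of `S` is at least `ρˢ(S) = max_{R, |R| = ⌊ℓ|S|/n⌋} max_{o'_R} min_{i ∈ S} sat_i(o'_R)`. -/
def providesSFPJR {C : Type*} [DecidableEq C] {n ℓ : ℕ}
    (A : Fin n → Fin ℓ → Finset C) (o : Fin ℓ → C) : Prop :=
  ∀ S : Finset (Fin n), S.Nonempty →
    ∀ R : Finset (Fin ℓ), R.card = ℓ * S.card / n →
      ∀ o' : Fin ℓ → C, ∃ j ∈ S, satR A {j} R o' ≤ satR A S univ o

/-- Strong proportional justified representation. -/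
def providesSPJR {C : Type*} [DecidableEq C] {n ℓ : ℕ}
    (A : Fin n → Fin ℓ → Finset C) (o : Fin ℓ → C) : Prop :=
  ∀ t : ℕ, 0 < t → ∀ S : Finset (Fin n),
    (∃ R : Finset (Fin ℓ), R.card = t ∧ ∀ r ∈ R, ∃ c : C, ∀ i ∈ S, c ∈ A i r) →
    min t (ℓ * S.card / n) ≤ satR A S univ o

/-- Full proportional justified representation: the group satisfaction of `S`
is at least `max_{T ⊆ [ℓ]} μ_S(T)`. -/
def providesFPJR {C : Type*} [DecidableEq C] {n ℓ : ℕ}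
    (A : Fin n → Fin ℓ → Finset C) (o : Fin ℓ → C) : Prop :=
  ∀ S : Finset (Fin n), S.Nonempty →
    ∀ T : Finset (Fin ℓ), ∃ R ⊆ T, R.card = T.card * S.card / n ∧
      ∀ o' : Fin ℓ → C, ∃ j ∈ S, satR A {j} R o' ≤ satR A S univ o

/-!
A voter's satisfaction never exceeds that of a group containing it, so sFJR gives sFPJR.
Satisfaction is monotone in the set of rounds, so the sFPJR guarantee extends from sets of
exactly `⌊ℓ|S|/n⌋` rounds to all smaller ones. sPJR follows by letting the suboutcome pick, on
`min(t, ⌊ℓ|S|/n⌋)` of the rounds where `S` agrees, a candidate approved by all of `S`; FPJR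
follows because `⌊|T||S|/n⌋ ≤ ⌊ℓ|S|/n⌋` for every `T`.
-/

section

variable {C : Type*} [DecidableEq C] {n ℓ : ℕ} (A : Fin n → Fin ℓ → Finset C)

lemma satR_mono_voters {S S' : Finset (Fin n)} (hS : S ⊆ S') (R : Finset (Fin ℓ))
    (o : Fin ℓ → C) : satR A S R o ≤ satR A S' R o :=
  card_le_card <| monotone_filter_right _ fun _ _ hr =>
    biUnion_subset_biUnion_of_subset_left _ hS hr

lemma satR_mono_rounds (S : Finset (Fin n)) {R R' : Finset (Fin ℓ)} (hR : R ⊆ R')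
    (o : Fin ℓ → C) : satR A S R o ≤ satR A S R' o :=
  card_le_card (filter_subset_filter _ hR)

lemma satR_singleton_eq_card {j : Fin n} {R : Finset (Fin ℓ)} {o : Fin ℓ → C}
    (h : ∀ r ∈ R, o r ∈ A j r) : satR A {j} R o = R.card := by
  unfold satR
  rw [filter_true_of_mem]
  simpa only [singleton_biUnion] using h

end

lemma mul_card_div_le {n : ℕ} (k : ℕ) (S : Finset (Fin n)) : k * S.card / n ≤ k :=
  Nat.div_le_of_le_mul <| by
    rw [mul_comm n]
    exact Nat.mul_le_mul_left k (card_le_univ S |>.trans_eq (Fintype.card_fin n))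

section

variable {C : Type*} [DecidableEq C] {n ℓ : ℕ} {A : Fin n → Fin ℓ → Finset C} {o : Fin ℓ → C}

lemma providesSFPJR_of_providesSFJR (h : providesSFJR A o) : providesSFPJR A o := by
  intro S hS R hR o'
  obtain ⟨i, hi, hbound⟩ := h S hS
  obtain ⟨j, hj, hle⟩ := hbound R hR o'
  exact ⟨j, hj, hle.trans (satR_mono_voters A (singleton_subset_iff.2 hi) _ o)⟩

lemma exists_satR_le_of_providesSFPJR (h : providesSFPJR A o) {S : Finset (Fin n)}
    (hS : S.Nonempty) {R : Finset (Fin ℓ)} (hR : R.card ≤ ℓ * S.card / n) (o' : Fin ℓ → C) :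
    ∃ j ∈ S, satR A {j} R o' ≤ satR A S univ o := by
  obtain ⟨R', hRR', -, hR'⟩ := exists_subsuperset_card_eq (subset_univ R) hR
    (by simpa only [card_univ, Fintype.card_fin] using mul_card_div_le ℓ S)
  obtain ⟨j, hj, hle⟩ := h S hS R' hR' o'
  exact ⟨j, hj, (satR_mono_rounds A _ hRR' o').trans hle⟩

lemma providesSPJR_of_providesSFPJR (h : providesSFPJR A o) : providesSPJR A o := by
  intro t ht S ⟨R, hRt, hagree⟩
  choose c hc using hagree
  rcases S.eq_empty_or_nonempty with rfl | hS
  · simp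
  obtain ⟨R₁, hR₁R, hR₁⟩ := R.exists_subset_card_eq ((min_le_left t _).trans hRt.ge)
  have : Nonempty C := by
    obtain ⟨r, hr⟩ := card_pos.1 (hRt ▸ ht)
    exact ⟨c r hr⟩
  let o' : Fin ℓ → C := fun r => if hr : r ∈ R then c r hr else Classical.arbitrary C
  obtain ⟨j, hj, hle⟩ := exists_satR_le_of_providesSFPJR h hS (hR₁ ▸ min_le_right _ _) o'
  calc min t (ℓ * S.card / n) = R₁.card := hR₁.symm
    _ = satR A {j} R₁ o' :=
      (satR_singleton_eq_card A fun r hr => by simpa [o', hR₁R hr] using hc r (hR₁R hr) j hj).symm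
    _ ≤ satR A S univ o := hle

lemma providesFPJR_of_providesSFPJR (h : providesSFPJR A o) : providesFPJR A o := by
  intro S hS T
  obtain ⟨R, hRT, hR⟩ := T.exists_subset_card_eq (mul_card_div_le T.card S)
  refine ⟨R, hRT, hR, exists_satR_le_of_providesSFPJR h hS ?_⟩
  rw [hR]
  exact Nat.div_le_div_right
    (Nat.mul_le_mul_right _ (card_le_univ T |>.trans_eq (Fintype.card_fin ℓ)))

end

theorem sFJR_implies_sFPJR_implies_sPJR_and_FPJR_general {C : Type*} [DecidableEq C] {n ℓ : ℕ}
    (A : Fin n → Fin ℓ → Finset C) (o : Fin ℓ → C) :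
    (providesSFJR A o → providesSFPJR A o) ∧
    (providesSFPJR A o → providesSPJR A o ∧ providesFPJR A o) :=
  ⟨providesSFPJR_of_providesSFJR,
    fun h => ⟨providesSPJR_of_providesSFPJR h, providesFPJR_of_providesSFPJR h⟩⟩

/-- Every outcome providing sFJR provides sFPJR, and every outcome providing
sFPJR provides both sPJR and FPJR. -/
theorem sFJR_implies_sFPJR_implies_sPJR_and_FPJR {C : Type*} [Fintype C] [Nonempty C] [DecidableEq C] {n ℓ : ℕ}
    (hℓ : 1 ≤ ℓ) (A : Fin n → Fin ℓ → Finset C) (o : Fin ℓ → C) :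
    (providesSFJR A o → providesSFPJR A o) ∧
    (providesSFPJR A o → providesSPJR A o ∧ providesFPJR A o) :=
  sFJR_implies_sFPJR_implies_sPJR_and_FPJR_general A o
end

section
/- For every temporal election E = (C, N, ℓ, A): every outcome providing full justified representation (FJR) also provides full proportional justified representation (FPJR); every outcome providing FPJR also provides both proportional justified representation (PJR) and weak full proportional justified representation (wFPJR); every outcome providing weak full justified representation (wFJR) also provides wFPJR; and every outcome providing wFPJR also provides weak proportional justified representation (wPJR). -/
open Finset

/-- Proportional justified representation. -/
def providesPJR {C : Type*} [DecidableEq C] {n ℓ : ℕ}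
    (A : Fin n → Fin ℓ → Finset C) (o : Fin ℓ → C) : Prop :=
  ∀ t : ℕ, 0 < t → ∀ S : Finset (Fin n),
    (∃ R : Finset (Fin ℓ), R.card = t ∧ ∀ r ∈ R, ∃ c : C, ∀ i ∈ S, c ∈ A i r) →
    t * S.card / n ≤ satR A S univ o

/-- Weak full proportional justified representation: the group satisfaction of
`S` is at least `ρʷ(S) = min_{R, |R| = ⌊ℓ|S|/n⌋} max_{o'_R} min_{i ∈ S} sat_i(o'_R)`. -/
def providesWFPJR {C : Type*} [DecidableEq C] {n ℓ : ℕ}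
    (A : Fin n → Fin ℓ → Finset C) (o : Fin ℓ → C) : Prop :=
  ∀ S : Finset (Fin n), S.Nonempty →
    ∃ R : Finset (Fin ℓ), R.card = ℓ * S.card / n ∧
      ∀ o' : Fin ℓ → C, ∃ j ∈ S, satR A {j} R o' ≤ satR A S univ o

/-- Weak proportional justified representation. -/
def providesWPJR {C : Type*} [DecidableEq C] {n ℓ : ℕ}
    (A : Fin n → Fin ℓ → Finset C) (o : Fin ℓ → C) : Prop :=
  ∀ S : Finset (Fin n),
    (∀ r : Fin ℓ, ∃ c : C, ∀ i ∈ S, c ∈ A i r) →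
    ℓ * S.card / n ≤ satR A S univ o


lemma satR_mono_S {C : Type*} [DecidableEq C] {n ℓ : ℕ} (A : Fin n → Fin ℓ → Finset C)
    {S S' : Finset (Fin n)} (h : S ⊆ S') (R : Finset (Fin ℓ)) (o : Fin ℓ → C) :
    satR A S R o ≤ satR A S' R o := by
  apply Finset.card_le_card
  intro r hr
  simp only [mem_filter, Finset.mem_biUnion] at hr ⊢
  obtain ⟨h1, i, hi, h2⟩ := hr
  exact ⟨h1, i, h hi, h2⟩

lemma satR_full {C : Type*} [DecidableEq C] {n ℓ : ℕ} (A : Fin n → Fin ℓ → Finset C)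
    {j : Fin n} {R : Finset (Fin ℓ)} {o : Fin ℓ → C}
    (h : ∀ r ∈ R, o r ∈ A j r) : satR A {j} R o = R.card := by
  unfold satR
  rw [Finset.filter_true_of_mem]
  intro r hr
  simp only [Finset.singleton_biUnion]
  exact h r hr

/-- FJR implies FPJR; FPJR implies PJR and wFPJR; wFJR implies wFPJR; and
wFPJR implies wPJR. -/
theorem FPJR_implications {C : Type*} [Fintype C] [Nonempty C] [DecidableEq C] {n ℓ : ℕ}
    (hℓ : 1 ≤ ℓ) (A : Fin n → Fin ℓ → Finset C) (o : Fin ℓ → C) :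
    (providesFJR A o → providesFPJR A o) ∧
    (providesFPJR A o → providesPJR A o ∧ providesWFPJR A o) ∧
    (providesWFJR A o → providesWFPJR A o) ∧
    (providesWFPJR A o → providesWPJR A o) := by
  have hsingle : ∀ (i : Fin n) (S : Finset (Fin n)), i ∈ S →
      satR A {i} univ o ≤ satR A S univ o := by
    intro i S hi
    exact satR_mono_S A (by simpa using hi) univ o
  refine ⟨?_, fun hFPJR => ⟨?_, ?_⟩, ?_, ?_⟩
  · -- FJR → FPJR
    intro h S hS T
    obtain ⟨i, hi, hT⟩ := h S hS
    obtain ⟨R, hRT, hRc, hRo⟩ := hT T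
    refine ⟨R, hRT, hRc, fun o' => ?_⟩
    obtain ⟨j, hj, hjle⟩ := hRo o'
    exact ⟨j, hj, hjle.trans (hsingle i S hi)⟩
  · -- FPJR → PJR
    have h := hFPJR
    intro t ht S hagree
    obtain ⟨R0, hR0c, hR0⟩ := hagree
    rcases S.eq_empty_or_nonempty with rfl | hS
    · simp
    obtain ⟨R, hRT, hRc, hRo⟩ := h S hS R0
    set o' : Fin ℓ → C := fun r =>
      if hr : r ∈ R0 then (hR0 r hr).choose else Classical.arbitrary C with ho'
    obtain ⟨j, hj, hjle⟩ := hRo o'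
    have : satR A {j} R o' = R.card := by
      apply satR_full
      intro r hr
      have hr0 : r ∈ R0 := hRT hr
      simp only [ho', dif_pos hr0]
      exact (hR0 r hr0).choose_spec j hj
    rw [this, hRc, hR0c] at hjle
    exact hjle
  · -- FPJR → wFPJR
    have h := hFPJR
    intro S hS
    obtain ⟨R, _, hRc, hRo⟩ := h S hS univ
    exact ⟨R, by simpa using hRc, hRo⟩
  · -- wFJR → wFPJR
    intro h S hS
    obtain ⟨i, hi, R, hRc, hRo⟩ := h S hS
    refine ⟨R, hRc, fun o' => ?_⟩
    obtain ⟨j, hj, hjle⟩ := hRo o'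
    exact ⟨j, hj, hjle.trans (hsingle i S hi)⟩
  · -- wFPJR → wPJR
    intro h S hagree
    rcases S.eq_empty_or_nonempty with rfl | hS
    · simp
    obtain ⟨R, hRc, hRo⟩ := h S hS
    set o' : Fin ℓ → C := fun r => (hagree r).choose with ho'
    obtain ⟨j, hj, hjle⟩ := hRo o'
    have : satR A {j} R o' = R.card := by
      apply satR_full
      intro r hr
      exact (hagree r).choose_spec j hj
    rw [this, hRc] at hjle
    exact hjle
end

section
/- Let E = (C, N, ℓ, A) be a temporal election in which every voter approves at least one candidate in every round (i.e., a_{i,r} ≠ ∅ for all i ∈ N, r ∈ [ℓ]) and in which n divides ℓ. Then E admits an outcome providing strong full proportional justified representation (sFPJR): in particular, if the voters of N are enumerated as 1,…,n and the outcome o is chosen so that in each round r the selected candidate o_r belongs to a_{i,r} for the voter i ≡ r (mod n), then o provides sFPJR. -/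
open Finset

/-- For elections in which every voter approves at least one candidate in
every round and `n ∣ ℓ`, any output of the Serial Dictatorship Rule (in each
round `r`, a candidate approved by voter `r mod n` is selected) provides
sFPJR; in particular such an election admits an sFPJR outcome. -/
theorem SDR_provides_sFPJR {C : Type*} [Fintype C] [Nonempty C] [DecidableEq C]
    {n ℓ : ℕ} (hn : 0 < n) (hℓ : 1 ≤ ℓ) (hdvd : n ∣ ℓ)
    (A : Fin n → Fin ℓ → Finset C) (hA : ∀ i r, (A i r).Nonempty)
    (o : Fin ℓ → C)
    (ho : ∀ r : Fin ℓ, o r ∈ A ⟨r.val % n, Nat.mod_lt _ hn⟩ r) :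
    providesSFPJR A o ∧ ∃ o' : Fin ℓ → C, providesSFPJR A o' := by
  obtain ⟨k, hk⟩ := hdvd
  have key : providesSFPJR A o := by
    intro S hS R hR o'
    obtain ⟨j, hj⟩ := hS
    refine ⟨j, hj, ?_⟩
    have h1 : satR A {j} R o' ≤ R.card := Finset.card_filter_le _ _
    have hRcard : R.card = S.card * k := by
      rw [hR, hk]
      rw [mul_assoc, Nat.mul_div_cancel_left _ hn, mul_comm]
    have h2 : (univ.filter fun r : Fin ℓ =>
        (⟨r.val % n, Nat.mod_lt _ hn⟩ : Fin n) ∈ S).card = S.card * k := by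
      rw [show S.card * k = (S ×ˢ Finset.range k).card by
        simp [Finset.card_product]]
      symm
      refine Finset.card_bij' (fun p hp => (⟨p.1.val + p.2 * n, by
        have hp2 : p.2 < k := Finset.mem_range.1 (Finset.mem_product.1 hp).2
        calc p.1.val + p.2 * n < n + p.2 * n := by omega
          _ = (p.2 + 1) * n := by ring
          _ ≤ k * n := Nat.mul_le_mul_right n hp2
          _ = ℓ := by rw [hk, mul_comm]⟩ : Fin ℓ))
        (fun r _ => (⟨r.val % n, Nat.mod_lt _ hn⟩, r.val / n)) ?_ ?_ ?_ ?_
      · intro p hp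
        obtain ⟨hp1, _⟩ := Finset.mem_product.1 hp
        simp only [Finset.mem_filter, Finset.mem_univ, true_and]
        have he : (⟨(p.1.val + p.2 * n) % n, Nat.mod_lt _ hn⟩ : Fin n) = p.1 := by
          apply Fin.ext
          show (p.1.val + p.2 * n) % n = p.1.val
          rw [Nat.add_mul_mod_self_right, Nat.mod_eq_of_lt p.1.isLt]
        have h' := hp1
        rwa [← he] at h'
      · intro r hr
        simp only [Finset.mem_filter, Finset.mem_univ, true_and] at hr
        simp only [Finset.mem_product, Finset.mem_range]
        refine ⟨hr, ?_⟩
        have hrl : r.val < n * k := hk ▸ r.isLt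
        exact Nat.div_lt_of_lt_mul (by omega)
      · intro p hp
        have e1 : (p.1.val + p.2 * n) % n = p.1.val := by
          rw [Nat.add_mul_mod_self_right, Nat.mod_eq_of_lt p.1.isLt]
        have e2 : (p.1.val + p.2 * n) / n = p.2 := by
          rw [Nat.add_mul_div_right _ _ hn, Nat.div_eq_of_lt p.1.isLt, Nat.zero_add]
        exact Prod.ext (Fin.ext e1) e2
      · intro r hr
        apply Fin.ext
        show r.val % n + r.val / n * n = r.val
        exact Nat.mod_add_div' _ _
    have h3 : (univ.filter fun r : Fin ℓ =>
        (⟨r.val % n, Nat.mod_lt _ hn⟩ : Fin n) ∈ S) ⊆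
        (univ.filter fun r => o r ∈ S.biUnion fun i => A i r) := by
      intro r hr
      simp only [Finset.mem_filter, Finset.mem_univ, true_and] at hr ⊢
      exact Finset.mem_biUnion.2 ⟨_, hr, ho r⟩
    have h4 : S.card * k ≤ satR A S univ o := by
      rw [← h2]; exact Finset.card_le_card h3
    omega
  exact ⟨key, o, key⟩
end

section
/- Let E = (C, N, ℓ, A) be a temporal election in which every voter approves exactly one candidate in every round (i.e., |a_{i,r}| = 1 for all i ∈ N, r ∈ [ℓ]). Then an outcome o provides weak proportional justified representation (wPJR) if and only if it provides weak extended justified representation (wEJR). -/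
open Finset

/-- With singleton ballots, a cohesive group's satisfaction equals each
member's individual satisfaction, since all members have identical ballots. -/
lemma satR_eq_single {C : Type*} [DecidableEq C] {n ℓ : ℕ}
    (A : Fin n → Fin ℓ → Finset C) (hA : ∀ i r, (A i r).card = 1)
    {S : Finset (Fin n)} (hagree : ∀ r : Fin ℓ, ∃ c : C, ∀ i ∈ S, c ∈ A i r)
    {i : Fin n} (hi : i ∈ S) (o : Fin ℓ → C) :
    satR A S univ o = satR A {i} univ o := by
  unfold satR
  congr 1
  apply Finset.filter_congr
  intro r _
  obtain ⟨c, hc⟩ := hagree r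
  have hall : ∀ j ∈ S, A j r = {c} := by
    intro j hj
    obtain ⟨x, hx⟩ := Finset.card_eq_one.mp (hA j r)
    have : c = x := by
      have := hc j hj; rw [hx] at this; exact Finset.mem_singleton.mp this
    rw [hx, this]
  have h1 : S.biUnion (fun j => A j r) = {c} := by
    apply Finset.Subset.antisymm
    · intro x hx
      obtain ⟨j, hj, hxj⟩ := Finset.mem_biUnion.mp hx
      rwa [hall j hj] at hxj
    · intro x hx
      exact Finset.mem_biUnion.mpr ⟨i, hi, by rwa [hall i hi]⟩
  have h2 : ({i} : Finset (Fin n)).biUnion (fun j => A j r) = {c} := by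
    simp [hall i hi]
  rw [h1, h2]

/-- For temporal elections in which every voter approves exactly one candidate
in every round, an outcome provides wPJR if and only if it provides wEJR. -/
theorem wPJR_iff_wEJR {C : Type*} [Fintype C] [Nonempty C] [DecidableEq C] {n ℓ : ℕ}
    (hℓ : 1 ≤ ℓ) (A : Fin n → Fin ℓ → Finset C) (hA : ∀ i r, (A i r).card = 1) (o : Fin ℓ → C) :
    providesWPJR A o ↔ providesWEJR A o := by
  constructor
  · intro h S hS hagree
    obtain ⟨i, hi⟩ := hS
    refine ⟨i, hi, ?_⟩
    have := h S hagree
    rwa [satR_eq_single A hA hagree hi o] at this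
  · intro h S hagree
    rcases S.eq_empty_or_nonempty with rfl | hS
    · simp
    · obtain ⟨i, hi, hb⟩ := h S hS hagree
      rwa [satR_eq_single A hA hagree hi o]
end
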